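/- arXiv:1406.0885 — 6 statements merged into one kernel-verified Lean document; each statement's English description precedes it below -/
import Mathlib

section
/- Let ω : [0,T] → ℝ be a continuous path with ω(0) = 0, let b < 0 < b̄ < K (allowing K = ∞), and let H_b denote the first hitting time of level b by ω. Then the indicator of the event {sup ω ≥ b̄ and inf ω > b} is bounded above by (1/(K−b))·((ω(T)−K)⁺ − (b−ω(T))⁺ − (ω(T)−b)·1_{H_b < T}) + 1_{ω(T) > b}. -/
open Set

noncomputable def pos (x : ℝ) : ℝ := max x 0

open Classical in
noncomputable def ind (P : Prop) : ℝ := if P then 1 else 0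

/-- First hitting time (before time `T`) of level `x` by the path `ω`, valued in `EReal`
(`⊤` if the level is not hit in `[0,T]`). -/
noncomputable def hit (ω : ℝ → ℝ) (T x : ℝ) : EReal :=
  sInf {s : EReal | ∃ t : ℝ, s = (t : EReal) ∧ 0 ≤ t ∧ t ≤ T ∧ ω t = x}

/-!
Off the event `{sup ω ≥ b̄, inf ω > b}` the right-hand side is nonnegative: if `ω T > b`
then `(ω T - K)⁺ ≥ ω T - K` pays for the subtracted `ω T - b`, and if `ω T < b` the path crossed
`b` strictly before `T`, so the last two terms in the bracket cancel. On the event the path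
never reaches `b`, hence `H_b = ∞`, `ω T > b`, and the right-hand side is at least `1`.
-/

lemma ind_pos {P : Prop} (h : P) : ind P = 1 := if_pos h

lemma ind_neg {P : Prop} (h : ¬P) : ind P = 0 := if_neg h

lemma ind_le_one (P : Prop) : ind P ≤ 1 := by
  unfold ind; split <;> norm_num

lemma le_pos (x : ℝ) : x ≤ pos x := le_max_left x 0

lemma pos_nonneg (x : ℝ) : 0 ≤ pos x := le_max_right x 0

lemma pos_of_nonpos {x : ℝ} (hx : x ≤ 0) : pos x = 0 := max_eq_right hx

lemma pos_of_nonneg {x : ℝ} (hx : 0 ≤ x) : pos x = x := max_eq_left hx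

lemma hit_eq_top {ω : ℝ → ℝ} {T x : ℝ} (h : ∀ t ∈ Icc 0 T, ω t ≠ x) : hit ω T x = ⊤ := by
  rw [hit, sInf_eq_top]
  rintro s ⟨t, rfl, ht₀, htT, hωt⟩
  exact absurd hωt (h t ⟨ht₀, htT⟩)

lemma hit_le {ω : ℝ → ℝ} {T x t : ℝ} (ht : t ∈ Icc 0 T) (hωt : ω t = x) :
    hit ω T x ≤ t :=
  sInf_le ⟨t, rfl, ht.1, ht.2, hωt⟩

lemma hit_lt_of_mem_Ioo {ω : ℝ → ℝ} {T x : ℝ} (hT : 0 ≤ T) (hcont : ContinuousOn ω (Icc 0 T))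
    (hx : x ∈ Ioo (ω T) (ω 0)) : hit ω T x < T := by
  obtain ⟨t, ht, hωt⟩ := intermediate_value_Ioo' hT hcont hx
  exact (hit_le (Ioo_subset_Icc_self ht) hωt).trans_lt (EReal.coe_lt_coe_iff.2 ht.2)

section Payoff

variable {lb K x : ℝ} {P : Prop}

lemma one_le_payoff_of_not (hK : lb < K) (hx : lb < x) (hP : ¬P) :
    1 ≤ (1 / (K - lb)) * (pos (x - K) - pos (lb - x) - (x - lb) * ind P) + ind (lb < x) := by
  rw [pos_of_nonpos (x := lb - x) (by linarith), ind_neg hP, ind_pos hx]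
  have : 0 ≤ (1 / (K - lb)) * pos (x - K) :=
    mul_nonneg (one_div_nonneg.2 (by linarith)) (pos_nonneg _)
  linarith

lemma payoff_nonneg (hK : lb < K) (hP : x < lb → P) :
    0 ≤ (1 / (K - lb)) * (pos (x - K) - pos (lb - x) - (x - lb) * ind P) + ind (lb < x) := by
  rw [one_div_mul_eq_div]
  rcases lt_or_ge lb x with hx | hx
  · rw [pos_of_nonpos (x := lb - x) (by linarith), sub_zero, ind_pos hx]
    have hbracket : -(K - lb) ≤ pos (x - K) - (x - lb) * ind P := by
      nlinarith [le_pos (x - K), ind_le_one P]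
    have : -1 ≤ (pos (x - K) - (x - lb) * ind P) / (K - lb) := by
      rwa [le_div_iff₀ (by linarith), neg_one_mul]
    linarith
  · have hbracket : pos (x - K) - pos (lb - x) - (x - lb) * ind P = 0 := by
      rw [pos_of_nonpos (by linarith), pos_of_nonneg (by linarith)]
      rcases hx.lt_or_eq with hx | rfl
      · rw [ind_pos (hP hx)]; ring
      · ring
    rw [hbracket, ind_neg hx.not_gt, zero_div, add_zero]

end Payoff

theorem stmt0 (T : ℝ) (hT : 0 < T) (ω : ℝ → ℝ)
    (hcont : ContinuousOn ω (Icc 0 T)) (hω0 : ω 0 = 0)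
    (lb ub K : ℝ) (hlb : lb < 0) (hub : 0 < ub) (hK : ub < K) :
    ind (ub ≤ sSup (ω '' Icc 0 T) ∧ lb < sInf (ω '' Icc 0 T)) ≤
      (1 / (K - lb)) *
        (pos (ω T - K) - pos (lb - ω T) -
          (ω T - lb) * ind (hit ω T lb < (T : EReal))) +
      ind (lb < ω T) := by
  have hKlb : lb < K := by linarith
  by_cases hE : lb < sInf (ω '' Icc 0 T)
  · have hbdd : BddBelow (ω '' Icc 0 T) := (isCompact_Icc.image_of_continuousOn hcont).bddBelow
    have habove : ∀ t ∈ Icc 0 T, lb < ω t := fun t ht =>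
      hE.trans_le (csInf_le hbdd (mem_image_of_mem ω ht))
    have hnohit : ¬ hit ω T lb < T := by
      rw [hit_eq_top fun t ht => (habove t ht).ne']
      exact not_top_lt
    exact (ind_le_one _).trans
      (one_le_payoff_of_not hKlb (habove T ⟨hT.le, le_rfl⟩) hnohit)
  · rw [ind_neg fun h => hE h.2]
    exact payoff_nonneg hKlb fun hωT => hit_lt_of_mem_Ioo hT.le hcont ⟨hωT, by rwa [hω0]⟩
end

section
/- Let ω : [0,T] → ℝ be a continuous path with ω(0) = 0, b < 0 < b̄, and K < b̄ arbitrary. Then the indicator of {sup_{t≤T} ω(t) ≥ b̄ and inf_{t≤T} ω(t) > b} is bounded above by (ω(T)−K)⁺/(b̄−K) + ((b̄−ω(T))/(b̄−K))·1_{sup_{t≤T} ω(t) ≥ b̄}. -/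
open Set

theorem stmt2 (T : ℝ) (hT : 0 < T) (ω : ℝ → ℝ)
    (hcont : ContinuousOn ω (Icc 0 T)) (hω0 : ω 0 = 0)
    (lb ub K : ℝ) (hlb : lb < 0) (hub : 0 < ub) (hK : K < ub) :
    ind (ub ≤ sSup (ω '' Icc 0 T) ∧ lb < sInf (ω '' Icc 0 T)) ≤
      pos (ω T - K) / (ub - K) +
        ((ub - ω T) / (ub - K)) * ind (ub ≤ sSup (ω '' Icc 0 T)) := by
  have hubK : (0:ℝ) < ub - K := by linarith
  by_cases h : ub ≤ sSup (ω '' Icc 0 T)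
  · have h1 : ind (ub ≤ sSup (ω '' Icc 0 T)) = 1 := if_pos h
    rw [h1, mul_one]
    have hle : ind (ub ≤ sSup (ω '' Icc 0 T) ∧ lb < sInf (ω '' Icc 0 T)) ≤ 1 := by
      unfold ind; split <;> norm_num
    refine hle.trans ?_
    have hpos : ω T - K ≤ pos (ω T - K) := le_max_left _ _
    rw [← add_div, le_div_iff₀ hubK]
    linarith
  · have h0 : ind (ub ≤ sSup (ω '' Icc 0 T) ∧ lb < sInf (ω '' Icc 0 T)) = 0 := by
      apply if_neg; tauto
    have h0' : ind (ub ≤ sSup (ω '' Icc 0 T)) = 0 := if_neg h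
    rw [h0, h0', mul_zero, add_zero]
    exact div_nonneg (le_max_right _ _) hubK.le
end

section
/- Let ω : [0,T] → ℝ be continuous with ω(0) = 0, let b < 0 < b̄ and K₁ ≥ b̄ > K₂ ≥ b. Define α₁ = 1/(K₁−b), α₂ = (b̄−b)/((K₁−b)(b̄−K₂)), α₄ = (K₁−b̄)/(K₁−b), β₁ = α₂−α₁, β₂ = α₁, β₃ = α₂. Then the indicator of the complement event {sup ω < b̄ or inf ω ≤ b} is bounded above by α₂(K₂−ω(T))⁺ + (1−α₄)·1_{ω(T) < b̄} − α₂(ω(T)−b̄)⁺ + α₁(ω(T)−K₁)⁺ + α₄ + β₁(ω(T)−b̄)·1_{H_{b̄} < H_b ∧ T} + β₂(ω(T)−b)·1_{H_{b̄} < H_b ≤ T} + β₃(ω(T)−b)·1_{H_b < H_{b̄} ∧ T}. -/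
/-!
The right-hand side is the terminal value of a semi-static hedge: a static portfolio of puts,
calls, a digital and cash, plus forward positions opened when `ω` first hits `ub` or `lb`.
According to which level is hit first (if any), it reduces to the static payoff plus an affine
function of `ω T`, and each of the four resulting piecewise-linear functions of `ω T` is `≥ 1`,
except when only `ub` is hit, where it is `≥ 0` and the event on the left fails: `sup ω ≥ ub`, and
by continuity `inf ω > lb`. A level hit exactly at time `T` forces `ω T` to be that level, which
kills the corresponding forward position and makes the strict and weak comparisons with `T` agree.
-/

open Set

lemma mul_ind_eq_self {P : Prop} {a : ℝ} (h : ¬P → a = 0) : a * ind P = a := by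
  by_cases hP : P
  · rw [ind_pos hP, mul_one]
  · rw [ind_neg hP, mul_zero, h hP]

section HittingTime

variable {ω : ℝ → ℝ} {T y : ℝ}

lemma hit_le_of_mem {t : ℝ} (ht : t ∈ Icc 0 T) (hy : ω t = y) : hit ω T y ≤ t :=
  sInf_le ⟨t, rfl, ht.1, ht.2, hy⟩

lemma hit_ne_top_iff : hit ω T y ≠ ⊤ ↔ y ∈ ω '' Icc 0 T := by
  refine ⟨fun h => ?_, fun ⟨t, ht, hy⟩ =>
    ne_top_of_le_ne_top (EReal.coe_ne_top t) (hit_le_of_mem ht hy)⟩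
  by_contra hy
  refine h (sInf_eq_top.2 ?_)
  rintro _ ⟨t, rfl, h0, hT, hωt⟩
  exact absurd ⟨t, ⟨h0, hT⟩, hωt⟩ hy

lemma hit_eq_top_iff : hit ω T y = ⊤ ↔ y ∉ ω '' Icc 0 T := by
  rw [← hit_ne_top_iff, not_not]

lemma hit_le_of_ne_top (h : hit ω T y ≠ ⊤) : hit ω T y ≤ T := by
  obtain ⟨t, ht, hy⟩ := hit_ne_top_iff.1 h
  exact (hit_le_of_mem ht hy).trans (EReal.coe_le_coe_iff.2 ht.2)

lemma exists_hit_eq_coe (hcont : ContinuousOn ω (Icc 0 T)) (h : hit ω T y ≠ ⊤) :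
    ∃ t ∈ Icc 0 T, ω t = y ∧ hit ω T y = t := by
  set S := Icc 0 T ∩ ω ⁻¹' {y}
  have hS : S.Nonempty := by
    obtain ⟨t, ht, hy⟩ := hit_ne_top_iff.1 h
    exact ⟨t, ht, hy⟩
  have hbdd : BddBelow S := ⟨0, fun t ht => ht.1.1⟩
  have hmem : sInf S ∈ S :=
    (hcont.preimage_isClosed_of_isClosed isClosed_Icc isClosed_singleton).csInf_mem hS hbdd
  refine ⟨sInf S, hmem.1, hmem.2, le_antisymm (hit_le_of_mem hmem.1 hmem.2) (le_sInf ?_)⟩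
  rintro _ ⟨t, rfl, h0, hT, hωt⟩
  exact EReal.coe_le_coe_iff.2 (csInf_le hbdd ⟨⟨h0, hT⟩, hωt⟩)

lemma apply_eq_of_le_hit (hcont : ContinuousOn ω (Icc 0 T)) (h : hit ω T y ≠ ⊤)
    (hT : (T : EReal) ≤ hit ω T y) : ω T = y := by
  obtain ⟨t, ht, hy, heq⟩ := exists_hit_eq_coe hcont h
  rwa [le_antisymm ht.2 (EReal.coe_le_coe_iff.1 (heq ▸ hT))] at hy

lemma hit_eq_top_of_hit_eq (hcont : ContinuousOn ω (Icc 0 T)) {z : ℝ} (hyz : y ≠ z)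
    (h : hit ω T y = hit ω T z) : hit ω T y = ⊤ := by
  by_contra hy
  obtain ⟨t, -, hωt, ht⟩ := exists_hit_eq_coe hcont hy
  obtain ⟨s, -, hωs, hs⟩ := exists_hit_eq_coe hcont (h ▸ hy)
  exact hyz (hωt.symm.trans (EReal.coe_injective (ht.symm.trans (h.trans hs)) ▸ hωs))

lemma csSup_image_lt_of_notMem (hcont : ContinuousOn ω (Icc 0 T)) (hT : 0 ≤ T)
    (hy : y ∉ ω '' Icc 0 T) (h0 : ω 0 < y) : sSup (ω '' Icc 0 T) < y := by
  have hmax := (isCompact_Icc.image_of_continuousOn hcont).sSup_mem ⟨ω 0, 0, ⟨le_rfl, hT⟩, rfl⟩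
  refine lt_of_not_ge fun hle => hy ?_
  exact (isPreconnected_Icc.image _ hcont).Icc_subset ⟨0, ⟨le_rfl, hT⟩, rfl⟩ hmax ⟨h0.le, hle⟩

lemma lt_csInf_image_of_notMem (hcont : ContinuousOn ω (Icc 0 T)) (hT : 0 ≤ T)
    (hy : y ∉ ω '' Icc 0 T) (h0 : y < ω 0) : y < sInf (ω '' Icc 0 T) := by
  have hmin := (isCompact_Icc.image_of_continuousOn hcont).sInf_mem ⟨ω 0, 0, ⟨le_rfl, hT⟩, rfl⟩
  refine lt_of_not_ge fun hle => hy ?_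
  exact (isPreconnected_Icc.image _ hcont).Icc_subset hmin ⟨0, ⟨le_rfl, hT⟩, rfl⟩ ⟨hle, h0.le⟩

end HittingTime

/-- The coefficients `a₁`, `a₂`, `a₄` are the paper's `α₁`, `α₂`, `α₄`. -/
noncomputable def staticPayoff (a₁ a₂ a₄ ub K₁ K₂ x : ℝ) : ℝ :=
  a₂ * pos (K₂ - x) + (1 - a₄) * ind (x < ub) - a₂ * pos (x - ub) + a₁ * pos (x - K₁) + a₄

lemma hedge_coeff_relations {lb ub K₁ K₂ : ℝ} (hK₁ : ub ≤ K₁) (hK₂ : lb ≤ K₂) (hK₂' : K₂ < ub) :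
    0 ≤ 1 / (K₁ - lb) ∧ 1 / (K₁ - lb) ≤ (ub - lb) / ((K₁ - lb) * (ub - K₂)) ∧
      1 / (K₁ - lb) * (ub - lb) = 1 - (K₁ - ub) / (K₁ - lb) ∧
      (ub - lb) / ((K₁ - lb) * (ub - K₂)) * (ub - K₂) = 1 - (K₁ - ub) / (K₁ - lb) ∧
      1 / (K₁ - lb) * (K₁ - ub) = (K₁ - ub) / (K₁ - lb) := by
  have hK₁lb : 0 < K₁ - lb := by linarith
  have hubK₂ : 0 < ub - K₂ := by linarith
  refine ⟨by positivity, ?_, by field_simp; ring, by field_simp; ring, by ring⟩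
  rw [div_le_div_iff₀ hK₁lb (by positivity)]
  nlinarith

section StaticPayoff

variable {a₁ a₂ a₄ lb ub K₁ K₂ : ℝ} (x : ℝ)

lemma one_le_staticPayoff (h₂ : 0 ≤ a₂) (hK₁ : ub ≤ K₁) (hx : x < ub) :
    1 ≤ staticPayoff a₁ a₂ a₄ ub K₁ K₂ x := by
  simp only [staticPayoff, pos, ind, max_def]
  split_ifs <;> nlinarith

lemma one_le_staticPayoff_add_of_lower_first (h₁ : 0 ≤ a₁) (h₂ : 0 ≤ a₂) (hK₂ : lb ≤ K₂)
    (e₂ : a₂ * (ub - K₂) = 1 - a₄) :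
    1 ≤ staticPayoff a₁ a₂ a₄ ub K₁ K₂ x + a₂ * (x - lb) := by
  simp only [staticPayoff, pos, ind, max_def]
  split_ifs <;> nlinarith

lemma one_le_staticPayoff_add_of_upper_first (h₁ : 0 ≤ a₁) (h₂ : 0 ≤ a₂)
    (e₁ : a₁ * (ub - lb) = 1 - a₄) (e₂ : a₂ * (ub - K₂) = 1 - a₄) :
    1 ≤ staticPayoff a₁ a₂ a₄ ub K₁ K₂ x + (a₂ - a₁) * (x - ub) + a₁ * (x - lb) := by
  simp only [staticPayoff, pos, ind, max_def]
  split_ifs <;> nlinarith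

lemma staticPayoff_add_of_upper_only_nonneg (h₁ : 0 ≤ a₁) (h₁₂ : a₁ ≤ a₂) (hK₁ : ub ≤ K₁)
    (e₂ : a₂ * (ub - K₂) = 1 - a₄) (e₄ : a₁ * (K₁ - ub) = a₄) :
    0 ≤ staticPayoff a₁ a₂ a₄ ub K₁ K₂ x + (a₂ - a₁) * (x - ub) := by
  simp only [staticPayoff, pos, ind, max_def]
  split_ifs <;> nlinarith

end StaticPayoff

noncomputable def hedgePayoff (a₁ a₂ a₄ lb ub K₁ K₂ T : ℝ) (ω : ℝ → ℝ) : ℝ :=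
  staticPayoff a₁ a₂ a₄ ub K₁ K₂ (ω T) +
    (a₂ - a₁) * (ω T - ub) * ind (hit ω T ub < min (hit ω T lb) T) +
    a₁ * (ω T - lb) * ind (hit ω T ub < hit ω T lb ∧ hit ω T lb ≤ T) +
    a₂ * (ω T - lb) * ind (hit ω T lb < min (hit ω T ub) T)

section HedgePayoff

variable {a₁ a₂ a₄ lb ub K₁ K₂ T : ℝ} {ω : ℝ → ℝ}

lemma hedgePayoff_of_hit_eq_top (hu : hit ω T ub = ⊤) (hl : hit ω T lb = ⊤) :
    hedgePayoff a₁ a₂ a₄ lb ub K₁ K₂ T ω = staticPayoff a₁ a₂ a₄ ub K₁ K₂ (ω T) := by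
  rw [hedgePayoff, ind_neg (hu ▸ not_top_lt), ind_neg fun h => not_top_lt (hu ▸ h.1),
    ind_neg (hl ▸ not_top_lt)]
  ring

lemma hedgePayoff_of_lower_first (hcont : ContinuousOn ω (Icc 0 T))
    (h : hit ω T lb < hit ω T ub) :
    hedgePayoff a₁ a₂ a₄ lb ub K₁ K₂ T ω =
      staticPayoff a₁ a₂ a₄ ub K₁ K₂ (ω T) + a₂ * (ω T - lb) := by
  have hstop : ¬hit ω T lb < min (hit ω T ub) T → a₂ * (ω T - lb) = 0 := fun hT => by
    rw [apply_eq_of_le_hit hcont h.ne_top (not_lt.1 fun h' => hT (lt_min h h')), sub_self,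
      mul_zero]
  rw [hedgePayoff, ind_neg fun h' => lt_asymm h (h'.trans_le (min_le_left _ _)),
    ind_neg fun h' => lt_asymm h h'.1, mul_ind_eq_self hstop]
  ring

lemma hedgePayoff_of_upper_only (hcont : ContinuousOn ω (Icc 0 T))
    (hu : hit ω T ub ≠ ⊤) (hl : hit ω T lb = ⊤) :
    hedgePayoff a₁ a₂ a₄ lb ub K₁ K₂ T ω =
      staticPayoff a₁ a₂ a₄ ub K₁ K₂ (ω T) + (a₂ - a₁) * (ω T - ub) := by
  have hstop : ¬hit ω T ub < min (hit ω T lb) T → (a₂ - a₁) * (ω T - ub) = 0 := fun hT => by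
    rw [hl, min_eq_right le_top, not_lt] at hT
    rw [apply_eq_of_le_hit hcont hu hT, sub_self, mul_zero]
  rw [hedgePayoff, mul_ind_eq_self hstop,
    ind_neg fun h => EReal.coe_ne_top T (top_le_iff.1 (hl ▸ h.2)), ind_neg (hl ▸ not_top_lt)]
  ring

lemma hedgePayoff_of_upper_first (h : hit ω T ub < hit ω T lb) (hl : hit ω T lb ≠ ⊤) :
    hedgePayoff a₁ a₂ a₄ lb ub K₁ K₂ T ω =
      staticPayoff a₁ a₂ a₄ ub K₁ K₂ (ω T) + (a₂ - a₁) * (ω T - ub) + a₁ * (ω T - lb) := by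
  have hlT := hit_le_of_ne_top hl
  rw [hedgePayoff, ind_pos (lt_min h (h.trans_le hlT)), ind_pos ⟨h, hlT⟩,
    ind_neg fun h' => lt_asymm h (h'.trans_le (min_le_left _ _))]
  ring

end HedgePayoff

theorem stmt3 (T : ℝ) (hT : 0 < T) (ω : ℝ → ℝ)
    (hcont : ContinuousOn ω (Icc 0 T)) (hω0 : ω 0 = 0)
    (lb ub K₁ K₂ : ℝ) (hlb : lb < 0) (hub : 0 < ub)
    (hK₁ : ub ≤ K₁) (hK₂ : lb ≤ K₂) (hK₂' : K₂ < ub) :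
    ind (sSup (ω '' Icc 0 T) < ub ∨ sInf (ω '' Icc 0 T) ≤ lb) ≤
      ((ub - lb) / ((K₁ - lb) * (ub - K₂))) * pos (K₂ - ω T) +
        (1 - (K₁ - ub) / (K₁ - lb)) * ind (ω T < ub) -
        ((ub - lb) / ((K₁ - lb) * (ub - K₂))) * pos (ω T - ub) +
        (1 / (K₁ - lb)) * pos (ω T - K₁) + (K₁ - ub) / (K₁ - lb) +
        ((ub - lb) / ((K₁ - lb) * (ub - K₂)) - 1 / (K₁ - lb)) * (ω T - ub) *
          ind (hit ω T ub < min (hit ω T lb) (T : EReal)) +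
        (1 / (K₁ - lb)) * (ω T - lb) *
          ind (hit ω T ub < hit ω T lb ∧ hit ω T lb ≤ (T : EReal)) +
        ((ub - lb) / ((K₁ - lb) * (ub - K₂))) * (ω T - lb) *
          ind (hit ω T lb < min (hit ω T ub) (T : EReal)) := by
  obtain ⟨h₁, h₁₂, e₁, e₂, e₄⟩ := hedge_coeff_relations hK₁ hK₂ hK₂'
  have h₂ := h₁.trans h₁₂
  change _ ≤ hedgePayoff (1 / (K₁ - lb)) ((ub - lb) / ((K₁ - lb) * (ub - K₂)))
    ((K₁ - ub) / (K₁ - lb)) lb ub K₁ K₂ T ω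
  have hind := ind_le_one (sSup (ω '' Icc 0 T) < ub ∨ sInf (ω '' Icc 0 T) ≤ lb)
  have hbdd := (isCompact_Icc.image_of_continuousOn hcont).bddAbove
  rcases lt_trichotomy (hit ω T lb) (hit ω T ub) with hlu | hlu | hul
  · rw [hedgePayoff_of_lower_first hcont hlu]
    exact hind.trans (one_le_staticPayoff_add_of_lower_first _ h₁ h₂ hK₂ e₂)
  · have hl := hit_eq_top_of_hit_eq hcont (hlb.trans hub).ne hlu
    have hu := hlu ▸ hl
    have hx : ω T < ub := (le_csSup hbdd ⟨T, ⟨hT.le, le_rfl⟩, rfl⟩).trans_lt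
      (csSup_image_lt_of_notMem hcont hT.le (hit_eq_top_iff.1 hu) (by rwa [hω0]))
    rw [hedgePayoff_of_hit_eq_top hu hl]
    exact hind.trans (one_le_staticPayoff _ h₂ hK₁ hx)
  · by_cases hl : hit ω T lb = ⊤
    · have hnot : ¬(sSup (ω '' Icc 0 T) < ub ∨ sInf (ω '' Icc 0 T) ≤ lb) := not_or.2
        ⟨(le_csSup hbdd (hit_ne_top_iff.1 hul.ne_top)).not_gt,
          (lt_csInf_image_of_notMem hcont hT.le (hit_eq_top_iff.1 hl) (by rwa [hω0])).not_ge⟩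
      rw [ind_neg hnot, hedgePayoff_of_upper_only hcont hul.ne_top hl]
      exact staticPayoff_add_of_upper_only_nonneg _ h₁ h₁₂ hK₁ e₂ e₄
    · rw [hedgePayoff_of_upper_first hul hl]
      exact hind.trans (one_le_staticPayoff_add_of_upper_first _ h₁ h₂ e₁ e₂)
end

section
/- Let μ be a centred probability measure on ℝ with distribution function F, let b < 0 < b̄, and define ρ₊(q) = sup{p ≤ F(b̄−) : m_p^q ≤ b̄} for q ∈ [F(b̄), 1]. Then it is impossible that simultaneously π* := ρ₊(1) = F(b) and F(b) > b̄/(b̄−b). (Equivalently: cases I and III of Theorem 2.2 are mutually exclusive.) -/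
/-!
On `(0, 1)` the quantile function `Q` is the generalized inverse of `F`, so it pushes Lebesgue
measure forward to `μ` and `∫₀¹ Q = ∫ x dμ = 0`. Write `p = F(b)`. On `(0, p]` we have `Q ≤ b`,
and if `m_p^1 = b̄` then `∫ₚ¹ Q = (1 - p) b̄`; hence `0 ≤ p b + (1 - p) b̄`, i.e.
`p ≤ b̄ / (b̄ - b)`. When `p = 1`, `m_1^1 = Q(1) ≤ b < b̄` directly.
-/

open MeasureTheory Set

/-- Distribution function of `μ`. -/
noncomputable def distF (μ : Measure ℝ) (x : ℝ) : ℝ := (μ (Iic x)).toReal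

/-- Left limit `F(x-)` of the distribution function. -/
noncomputable def distFm (μ : Measure ℝ) (x : ℝ) : ℝ := (μ (Iio x)).toReal

/-- Quantile function of `μ`. -/
noncomputable def quantile (μ : Measure ℝ) (u : ℝ) : ℝ :=
  sInf {x : ℝ | u ≤ distF μ x}

/-- The sub-probability measure `μ_p^q`, i.e. `μ` restricted to its quantile range `(p,q]`,
realised as the image under the quantile function of Lebesgue measure on `(p,q]`. -/
noncomputable def qmeas (μ : Measure ℝ) (p q : ℝ) : Measure ℝ :=
  (volume.restrict (Ioc p q)).map (quantile μ)

/-- `m̃_p^q = ∫ x dμ_p^q`. -/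
noncomputable def mtil (μ : Measure ℝ) (p q : ℝ) : ℝ :=
  ∫ u in Ioc p q, quantile μ u

/-- The barycentre `m_p^q` of `μ` restricted to the quantile range `(p,q]`. -/
noncomputable def bary (μ : Measure ℝ) (p q : ℝ) : ℝ :=
  if p < q then (q - p)⁻¹ * mtil μ p q else quantile μ q

open Filter Topology ProbabilityTheory

lemma volume_Iic_inter_Ioo_zero_one {c : ℝ} (hc : c ≤ 1) :
    volume (Iic c ∩ Ioo 0 1) = ENNReal.ofReal c := by
  refine le_antisymm ?_ ?_
  · calc volume (Iic c ∩ Ioo 0 1) ≤ volume (Ioc 0 c) :=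
          measure_mono fun u hu => ⟨hu.2.1, hu.1⟩
      _ = ENNReal.ofReal c := by rw [Real.volume_Ioc, sub_zero]
  · calc ENNReal.ofReal c = volume (Ioo 0 c) := by rw [Real.volume_Ioo, sub_zero]
      _ ≤ volume (Iic c ∩ Ioo 0 1) :=
          measure_mono fun u hu => ⟨hu.2.le, hu.1, hu.2.trans_le hc⟩

lemma mtil_add {μ : Measure ℝ} {p q r : ℝ} (hpq : p ≤ q) (hqr : q ≤ r)
    (h : IntegrableOn (quantile μ) (Ioc p r)) : mtil μ p q + mtil μ q r = mtil μ p r := by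
  rw [mtil, mtil, mtil, ← setIntegral_union (Ioc_disjoint_Ioc_of_le le_rfl) measurableSet_Ioc
    (h.mono_set (Ioc_subset_Ioc_right hqr)) (h.mono_set (Ioc_subset_Ioc_left hpq)),
    Ioc_union_Ioc_eq_Ioc hpq hqr]

lemma mtil_eq_mul_bary {μ : Measure ℝ} {p q : ℝ} (h : p < q) :
    mtil μ p q = (q - p) * bary μ p q := by
  rw [bary, if_pos h, ← mul_assoc, mul_inv_cancel₀ (sub_ne_zero.2 h.ne'), one_mul]

section Quantile

variable {μ : Measure ℝ} [IsProbabilityMeasure μ]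

lemma distF_eq_cdf : distF μ = cdf μ :=
  funext fun x => (cdf_eq_real μ x).symm

lemma monotone_distF : Monotone (distF μ) :=
  distF_eq_cdf (μ := μ) ▸ monotone_cdf μ

lemma distF_le_one (x : ℝ) : distF μ x ≤ 1 :=
  distF_eq_cdf (μ := μ) ▸ cdf_le_one μ x

lemma bddBelow_le_distF {u : ℝ} (hu : 0 < u) : BddBelow {x | u ≤ distF μ x} := by
  obtain ⟨z, hz⟩ := ((distF_eq_cdf (μ := μ) ▸ tendsto_cdf_atBot μ).eventually
    (eventually_lt_nhds hu)).exists
  exact ⟨z, fun y hy => le_of_not_gt fun hyz =>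
    (hy.trans (monotone_distF hyz.le)).not_gt hz⟩

lemma exists_le_distF {u : ℝ} (hu : u < 1) : ∃ x, u ≤ distF μ x :=
  (((distF_eq_cdf (μ := μ) ▸ tendsto_cdf_atTop μ).eventually
    (eventually_gt_nhds hu)).exists).imp fun _ => le_of_lt

lemma quantile_le_of_le_distF {u x : ℝ} (hu : 0 < u) (hux : u ≤ distF μ x) :
    quantile μ u ≤ x :=
  csInf_le (bddBelow_le_distF hu) hux

/-- The infimum defining `quantile μ u` is attained, by right continuity of `F`. -/
lemma le_distF_quantile {u : ℝ} (hu : u ∈ Ioo 0 1) : u ≤ distF μ (quantile μ u) := by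
  have hS : {x | u ≤ distF μ x}.Nonempty := exists_le_distF hu.2
  rw [quantile, distF_eq_cdf]
  rw [distF_eq_cdf] at hS
  refine ge_of_tendsto (((cdf μ).right_continuous _).mono_left
    (nhdsWithin_mono _ Ioi_subset_Ici_self)) (eventually_nhdsWithin_of_forall fun y hy => ?_)
  obtain ⟨x, hxS, hxy⟩ := exists_lt_of_csInf_lt hS hy
  exact hxS.trans (monotone_cdf μ hxy.le)

lemma quantile_le_iff {u x : ℝ} (hu : u ∈ Ioo 0 1) : quantile μ u ≤ x ↔ u ≤ distF μ x :=
  ⟨fun h => (le_distF_quantile hu).trans (monotone_distF h),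
    quantile_le_of_le_distF hu.1⟩

lemma monotoneOn_quantile : MonotoneOn (quantile μ) (Ioo 0 1) := fun _ ha _ hb hab =>
  (quantile_le_iff ha).2 (hab.trans (le_distF_quantile hb))

lemma aemeasurable_quantile : AEMeasurable (quantile μ) (volume.restrict (Ioc 0 1)) := by
  rw [← Measure.restrict_congr_set Ioo_ae_eq_Ioc]
  exact aemeasurable_restrict_of_monotoneOn measurableSet_Ioo monotoneOn_quantile

lemma qmeas_zero_one : qmeas μ 0 1 = μ := by
  refine (Measure.ext_of_Iic μ _ fun x => ?_).symm
  have hpre : quantile μ ⁻¹' Iic x ∩ Ioo 0 1 = Iic (distF μ x) ∩ Ioo 0 1 := by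
    ext u
    simp only [mem_inter_iff, mem_preimage, mem_Iic, and_congr_left_iff]
    exact quantile_le_iff
  rw [qmeas, Measure.map_apply_of_aemeasurable aemeasurable_quantile measurableSet_Iic,
    ← Measure.restrict_congr_set Ioo_ae_eq_Ioc, Measure.restrict_apply' measurableSet_Ioo, hpre,
    volume_Iic_inter_Ioo_zero_one (distF_le_one x), distF,
    ENNReal.ofReal_toReal (measure_ne_top _ _)]

lemma integrableOn_quantile (hint : Integrable id μ) : IntegrableOn (quantile μ) (Ioc 0 1) :=
  (integrable_map_measure aestronglyMeasurable_id aemeasurable_quantile).mp <| by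
    rwa [← qmeas, qmeas_zero_one]

lemma mtil_zero_one : mtil μ 0 1 = ∫ x, x ∂μ := by
  calc mtil μ 0 1 = ∫ x, id x ∂(qmeas μ 0 1) :=
        (integral_map aemeasurable_quantile aestronglyMeasurable_id).symm
    _ = ∫ x, x ∂μ := by rw [qmeas_zero_one]; rfl

lemma mtil_zero_distF_le (hint : Integrable id μ) (x : ℝ) :
    mtil μ 0 (distF μ x) ≤ distF μ x * x := by
  have hF0 : 0 ≤ distF μ x := ENNReal.toReal_nonneg
  calc mtil μ 0 (distF μ x) ≤ ∫ _ in Ioc 0 (distF μ x), x :=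
        setIntegral_mono_on
          ((integrableOn_quantile hint).mono_set (Ioc_subset_Ioc_right (distF_le_one x)))
          (integrableOn_const measure_Ioc_lt_top.ne) measurableSet_Ioc
          fun u hu => quantile_le_of_le_distF hu.1 hu.2
    _ = distF μ x * x := by rw [setIntegral_const, Real.volume_real_Ioc_of_le hF0, sub_zero,
          smul_eq_mul]

end Quantile

theorem stmt8_general (μ : Measure ℝ) [IsProbabilityMeasure μ]
    (hint : Integrable id μ) (hcent : ∫ x, x ∂μ = 0)
    (lb ub : ℝ) (hlb : lb < 0) (hub : 0 < ub) :
    ¬ (bary μ (distF μ lb) 1 = ub ∧ ub / (ub - lb) < distF μ lb) := by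
  rintro ⟨hbary, hlt⟩
  set p := distF μ lb
  rw [div_lt_iff₀ (by linarith)] at hlt
  have hp0 : 0 < p := by nlinarith
  rcases (distF_le_one (μ := μ) lb).lt_or_eq with hp1 | hp1
  · have hsplit : mtil μ 0 p + mtil μ p 1 = 0 := by
      rw [mtil_add hp0.le hp1.le (integrableOn_quantile hint), mtil_zero_one, hcent]
    rw [mtil_eq_mul_bary hp1, hbary] at hsplit
    nlinarith [mtil_zero_distF_le hint lb]
  · rw [show p = 1 from hp1, bary, if_neg (lt_irrefl 1)] at hbary
    linarith [quantile_le_of_le_distF (μ := μ) (x := lb) one_pos hp1.ge]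

theorem stmt8 (μ : Measure ℝ) [IsProbabilityMeasure μ]
    (hint : Integrable id μ) (hcent : ∫ x, x ∂μ = 0)
    (hne : μ ≠ Measure.dirac 0) (lb ub : ℝ) (hlb : lb < 0) (hub : 0 < ub) :
    ¬ (bary μ (distF μ lb) 1 = ub ∧ ub / (ub - lb) < distF μ lb) :=
  stmt8_general μ hint hcent lb ub hlb hub
end

section
/- Let (M_t)_{t≥0} be a continuous uniformly integrable martingale with terminal value M_∞ ~ μ and running maximum M̄_∞ = sup_{t≤∞} M_t. If P(M̄_∞ = b̄) > 0 for some b̄, then almost surely on the event {M̄_∞ = b̄} we have M_t = b̄ for all t ≥ H_{b̄} (where H_{b̄} is the first hitting time of b̄); in particular {M̄_∞ = b̄} ⊆ {M_∞ = b̄} a.s. and μ({b̄}) ≥ P(M̄_∞ = b̄). -/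
open MeasureTheory Set Filter Topology
open scoped NNReal ENNReal

/-!
Suppose a path of `M` attains its overall maximum `c` at time `s` and later falls below
`c - δ`. For every `ε > 0` it then enters `(c - ε, ∞)` at some time `σ ≤ s` and afterwards
leaves the band `[c - δ, c + ε]` through its lower end, at a time `τ`. Optional sampling gives
`E[M_τ - M_σ] = 0`, whereas `M_τ - M_σ ≤ 2ε` always and `M_τ - M_σ ≤ ε - δ` on this event, so
the event has probability at most `2ε / (δ + ε)`. Letting `ε → 0`, almost surely a path that
attains its supremum stays there, and its limit `M_∞` is then that supremum.

The times `σ` and `τ` are hitting times of open sets, hence only optional times; optional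
sampling for them follows from the discrete theorem applied to their dyadic approximations from
above, using continuity of the paths and uniform integrability of conditional expectations.
-/

noncomputable section

def dyadicAbove (n : ℕ) (x : ℝ≥0) : ℝ≥0 :=
  ((⌊x * 2 ^ n⌋₊ + 1 : ℕ) : ℝ≥0) / 2 ^ n

section Dyadic

variable {n : ℕ} {x t : ℝ≥0}

lemma lt_dyadicAbove (n : ℕ) (x : ℝ≥0) : x < dyadicAbove n x := by
  rw [dyadicAbove, lt_div_iff₀ (by positivity)]
  exact_mod_cast Nat.lt_floor_add_one (x * 2 ^ n)

lemma dyadicAbove_le (n : ℕ) (x : ℝ≥0) : dyadicAbove n x ≤ x + (2 ^ n)⁻¹ := by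
  rw [dyadicAbove, div_le_iff₀ (by positivity), add_mul, inv_mul_cancel₀ (by positivity)]
  push_cast
  gcongr
  exact Nat.floor_le zero_le

lemma dyadicAbove_le_iff : dyadicAbove n x ≤ t ↔ x < (⌊t * 2 ^ n⌋₊ : ℝ≥0) / 2 ^ n := by
  rw [dyadicAbove, div_le_iff₀ (by positivity), ← Nat.le_floor_iff zero_le,
    Nat.add_one_le_iff, Nat.floor_lt zero_le, lt_div_iff₀ (by positivity)]

lemma tendsto_dyadicAbove (x : ℝ≥0) : Tendsto (dyadicAbove · x) atTop (𝓝 x) := by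
  have h : Tendsto (fun n : ℕ => x + (2 ^ n)⁻¹) atTop (𝓝 (x + 0)) := by
    refine tendsto_const_nhds.add ?_
    simpa only [inv_pow] using
      NNReal.tendsto_pow_atTop_nhds_zero_of_lt_one (r := 2⁻¹) (by norm_num)
  rw [add_zero] at h
  exact tendsto_of_tendsto_of_tendsto_of_le_of_le tendsto_const_nhds h
    (fun n => (lt_dyadicAbove n x).le) (dyadicAbove_le · x)

lemma countable_range_dyadicAbove (n : ℕ) : (range (dyadicAbove n)).Countable :=
  (countable_range fun k : ℕ => (k : ℝ≥0) / 2 ^ n).mono <| by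
    rintro _ ⟨x, rfl⟩
    exact ⟨_, rfl⟩

end Dyadic

section FirstHit

variable {X : Type*} {f : ℝ≥0 → X} {U : Set X} {s T t u : ℝ≥0}

def firstHit (f : ℝ≥0 → X) (U : Set X) (s T : ℝ≥0) : ℝ≥0 :=
  sInf (insert T {t | s ≤ t ∧ f t ∈ U})

lemma firstHit_le_right : firstHit f U s T ≤ T :=
  csInf_le (OrderBot.bddBelow _) (mem_insert _ _)

lemma firstHit_le (hst : s ≤ t) (ht : f t ∈ U) : firstHit f U s T ≤ t :=
  csInf_le (OrderBot.bddBelow _) (mem_insert_of_mem _ ⟨hst, ht⟩)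

lemma le_firstHit (hsT : s ≤ T) : s ≤ firstHit f U s T := by
  refine le_csInf (insert_nonempty _ _) ?_
  rintro t (rfl | ht)
  exacts [hsT, ht.1]

lemma firstHit_lt_iff : firstHit f U s T < u ↔ T < u ∨ ∃ t < u, s ≤ t ∧ f t ∈ U := by
  rw [firstHit, csInf_lt_iff (OrderBot.bddBelow _) (insert_nonempty _ _)]
  constructor
  · rintro ⟨t, rfl | ht, htu⟩
    exacts [Or.inl htu, Or.inr ⟨t, htu, ht⟩]
  · rintro (hT | ⟨t, htu, ht⟩)
    exacts [⟨T, mem_insert _ _, hT⟩, ⟨t, mem_insert_of_mem _ ht, htu⟩]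

variable [TopologicalSpace X]

lemma apply_firstHit_mem_closure (hf : Continuous f) (h : ∃ t ≤ T, s ≤ t ∧ f t ∈ U) :
    f (firstHit f U s T) ∈ closure U := by
  obtain ⟨t, htT, hS⟩ := h
  replace hS : t ∈ {t | s ≤ t ∧ f t ∈ U} := hS
  have hne : {t | s ≤ t ∧ f t ∈ U}.Nonempty := ⟨t, hS⟩
  have heq : firstHit f U s T = sInf {t | s ≤ t ∧ f t ∈ U} := by
    rw [firstHit, csInf_insert (OrderBot.bddBelow _) hne, inf_eq_right]
    exact (csInf_le (OrderBot.bddBelow _) hS).trans htT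
  rw [heq]
  exact map_mem_closure hf (csInf_mem_closure hne (OrderBot.bddBelow _)) fun t ht => ht.2

/-- If `f` were in `U` at the hitting time, it would be in `U` slightly earlier. -/
lemma apply_firstHit_notMem (hf : Continuous f) (hU : IsOpen U) (h : s < firstHit f U s T) :
    f (firstHit f U s T) ∉ U := by
  intro hmem
  obtain ⟨a, ha, hIoc⟩ :=
    exists_Ioc_subset_of_mem_nhds ((hU.preimage hf).mem_nhds hmem) ⟨s, h⟩
  obtain ⟨v, hv, hvτ⟩ := exists_between (max_lt ha h)
  have hvU : f v ∈ U := hIoc ⟨(le_max_left a s).trans_lt hv, hvτ.le⟩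
  exact (firstHit_le ((le_max_right a s).trans hv.le) hvU).not_gt hvτ

lemma firstHit_lt_iff_exists_denseSeq (hf : Continuous f) (hU : IsOpen U) :
    firstHit f U s T < u ↔ T < u ∨ ∃ k, s < TopologicalSpace.denseSeq ℝ≥0 k ∧
      TopologicalSpace.denseSeq ℝ≥0 k < u ∧ f (TopologicalSpace.denseSeq ℝ≥0 k) ∈ U := by
  rw [firstHit_lt_iff]
  refine or_congr_right
    ⟨fun ⟨t, htu, hst, htU⟩ => ?_, fun ⟨k, hsk, hku, hkU⟩ => ⟨_, hku, hsk.le, hkU⟩⟩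
  have hV : IsOpen (Iio u ∩ f ⁻¹' U) := isOpen_Iio.inter (hU.preimage hf)
  have ht : t ∈ closure (Ioi s) := by rw [closure_Ioi' nonempty_Ioi]; exact hst
  obtain ⟨x, hxV, hxs⟩ := mem_closure_iff.1 ht _ hV ⟨htu, htU⟩
  obtain ⟨k, ⟨hku, hkU⟩, hsk⟩ :=
    (TopologicalSpace.denseRange_denseSeq ℝ≥0).exists_mem_open (hV.inter isOpen_Ioi)
      ⟨x, hxV, hxs⟩
  exact ⟨k, hsk, hku, hkU⟩

end FirstHit

section Band

variable {f : ℝ≥0 → ℝ} {c ε δ : ℝ} {N s t : ℝ≥0}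

def bandEntry (f : ℝ≥0 → ℝ) (c ε : ℝ) (N : ℝ≥0) : ℝ≥0 := firstHit f (Ioi (c - ε)) 0 N

def bandExit (f : ℝ≥0 → ℝ) (c ε δ : ℝ) (N : ℝ≥0) : ℝ≥0 :=
  firstHit f (Iio (c - δ) ∪ Ioi (c + ε)) (bandEntry f c ε N) N

lemma bandEntry_le_bandExit : bandEntry f c ε N ≤ bandExit f c ε δ N :=
  le_firstHit firstHit_le_right

lemma le_apply_bandEntry (hf : Continuous f) (h : bandEntry f c ε N < N) :
    c - ε ≤ f (bandEntry f c ε N) := by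
  obtain hN | ⟨t, htN, h0t, ht⟩ := firstHit_lt_iff.1 h
  · exact absurd hN (lt_irrefl _)
  · simpa only [bandEntry, closure_Ioi, mem_Ici] using
      apply_firstHit_mem_closure hf ⟨t, htN.le, h0t, ht⟩

lemma apply_bandExit_sub_apply_bandEntry_le (hf : Continuous f) (hε : 0 ≤ ε) :
    f (bandExit f c ε δ N) - f (bandEntry f c ε N) ≤ 2 * ε := by
  rcases (bandEntry_le_bandExit (δ := δ)).eq_or_lt with h | h
  · rw [← h]
    linarith
  · have hexit := apply_firstHit_notMem hf (isOpen_Iio.union isOpen_Ioi) h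
    have hentry := le_apply_bandEntry hf (h.trans_le firstHit_le_right)
    simp only [mem_union, mem_Iio, mem_Ioi, not_or, not_lt] at hexit
    unfold bandExit
    linarith [hexit.2]

lemma bandEntry_lt_and_apply_bandExit_le (hf : Continuous f) (hε : 0 < ε) (hδ : 0 ≤ δ)
    (hle : ∀ r, f r ≤ c) (hst : s ≤ t) (htN : t ≤ N) (hs : f s = c) (ht : f t < c - δ) :
    bandEntry f c ε N < N ∧ f (bandExit f c ε δ N) ≤ c - δ := by
  have hentry : bandEntry f c ε N ≤ s :=
    firstHit_le zero_le (show c - ε < f s by linarith)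
  have hsN : s < N := (hst.trans htN).lt_of_ne fun hsN => by
    rw [le_antisymm (hsN ▸ htN) hst, hs] at ht
    linarith
  refine ⟨hentry.trans_lt hsN, ?_⟩
  have htU : f t ∈ Iio (c - δ) ∪ Ioi (c + ε) := Or.inl ht
  have hexit := apply_firstHit_mem_closure hf ⟨t, htN, hentry.trans hst, htU⟩
  rw [closure_union, closure_Iio, closure_Ioi] at hexit
  rcases hexit with h | h
  · exact h
  · have := hle (bandExit f c ε δ N)
    unfold bandExit at this
    exact absurd h (by simp only [mem_Ici, not_le]; linarith)

end Band

section Path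

variable {f : ℝ≥0 → ℝ} {L : ℝ}

lemma exists_forall_le_of_tendsto_lt (hf : Continuous f) (hL : Tendsto f atTop (𝓝 L))
    {x₀ : ℝ≥0} (h : L < f x₀) : ∃ z, ∀ y, f y ≤ f z :=
  hf.exists_forall_ge' x₀ <| by
    rw [cocompact_eq_atTop]
    exact (hL.eventually (gt_mem_nhds h)).mono fun _ => le_of_lt

lemma bddAbove_range_of_tendsto (hf : Continuous f) (hL : Tendsto f atTop (𝓝 L)) :
    BddAbove (range f) := by
  by_cases h : ∃ x₀, L < f x₀
  · obtain ⟨x₀, hx₀⟩ := h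
    obtain ⟨z, hz⟩ := exists_forall_le_of_tendsto_lt hf hL hx₀
    exact ⟨f z, forall_mem_range.2 hz⟩
  · simp only [not_exists, not_lt] at h
    exact ⟨L, forall_mem_range.2 h⟩

lemma limit_eq_ciSup_of_stays_at_ciSup (hf : Continuous f) (hL : Tendsto f atTop (𝓝 L))
    (hstay : ∀ s t, s ≤ t → f s = ⨆ r, f r → f t = ⨆ r, f r) : L = ⨆ r, f r := by
  have hbdd := bddAbove_range_of_tendsto hf hL
  refine (le_of_tendsto' hL (le_ciSup hbdd)).eq_or_lt.resolve_right fun hlt => ?_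
  obtain ⟨x₀, hx₀⟩ := exists_lt_of_lt_ciSup hlt
  obtain ⟨z, hz⟩ := exists_forall_le_of_tendsto_lt hf hL hx₀
  have hmax : f z = ⨆ r, f r := le_antisymm (le_ciSup hbdd z) (ciSup_le hz)
  have hconst : Tendsto f atTop (𝓝 (⨆ r, f r)) :=
    tendsto_const_nhds.congr' <| (eventually_ge_atTop z).mono fun t ht => (hstay z t ht hmax).symm
  exact hlt.ne (tendsto_nhds_unique hL hconst)

end Path

theorem MeasureTheory.UniformIntegrable.tendsto_integral_of_ae_tendsto {α E : Type*}
    {m : MeasurableSpace α} {μ : Measure α} [IsFiniteMeasure μ] [NormedAddCommGroup E]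
    [NormedSpace ℝ E] {f : ℕ → α → E} {g : α → E} (hUI : UniformIntegrable f 1 μ)
    (hfg : ∀ᵐ x ∂μ, Tendsto (fun n => f n x) atTop (𝓝 (g x))) :
    Tendsto (fun n => ∫ x, f n x ∂μ) atTop (𝓝 (∫ x, g x ∂μ)) :=
  tendsto_integral_of_L1' g (hUI.integrable_of_ae_tendsto hfg).1
    (Eventually.of_forall fun n => (hUI.memLp n).integrable le_rfl)
    (tendsto_Lp_finite_of_tendsto_ae le_rfl ENNReal.one_ne_top hUI.1
      (hUI.memLp_of_ae_tendsto hfg) hUI.2.1 hfg)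

section OptionalTime

variable {Ω : Type*} {m0 : MeasurableSpace Ω} {ℱ : Filtration ℝ≥0 m0}

def IsOptionalTime (ℱ : Filtration ℝ≥0 m0) (τ : Ω → ℝ≥0) : Prop :=
  ∀ t, MeasurableSet[ℱ t] {ω | τ ω < t}

namespace IsOptionalTime

variable {τ : Ω → ℝ≥0}

lemma const (c : ℝ≥0) : IsOptionalTime ℱ fun _ : Ω => c := fun _ => MeasurableSet.const _

lemma measurable (hτ : IsOptionalTime ℱ τ) : Measurable τ :=
  measurable_of_Iio fun t => ℱ.le t _ (hτ t)

lemma isStoppingTime_dyadicAbove (hτ : IsOptionalTime ℱ τ) (n : ℕ) :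
    IsStoppingTime ℱ fun ω => (dyadicAbove n (τ ω) : WithTop ℝ≥0) := by
  intro t
  simp only [WithTop.coe_le_coe, dyadicAbove_le_iff]
  refine ℱ.mono ?_ _ (hτ _)
  rw [div_le_iff₀ (by positivity)]
  exact Nat.floor_le zero_le

end IsOptionalTime

variable {M : ℝ≥0 → Ω → ℝ}

lemma isOptionalTime_firstHit {σ : Ω → ℝ≥0} (hσ : IsOptionalTime ℱ σ) (hM : Adapted ℱ M)
    (hcont : ∀ ω, Continuous fun t => M t ω) {U : Set ℝ} (hU : IsOpen U) (T : ℝ≥0) :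
    IsOptionalTime ℱ fun ω => firstHit (M · ω) U (σ ω) T := by
  intro u
  set d := TopologicalSpace.denseSeq ℝ≥0
  have h : {ω | firstHit (M · ω) U (σ ω) T < u} =
      {_ω | T < u} ∪ ⋃ k, ⋃ (_ : d k < u), {ω | σ ω < d k} ∩ M (d k) ⁻¹' U := by
    ext ω
    simp [firstHit_lt_iff_exists_denseSeq (hcont ω) hU, d]
  rw [h]
  exact (MeasurableSet.const _).union <| MeasurableSet.iUnion fun k =>
    MeasurableSet.iUnion fun hk => ℱ.mono hk.le _ ((hσ _).inter (hM _ hU.measurableSet))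

variable {P : Measure Ω}

theorem MeasureTheory.Martingale.integrable_and_integral_apply_optionalTime
    [IsFiniteMeasure P] (hM : Martingale M ℱ P) (hcont : ∀ ω, Continuous fun t => M t ω)
    {τ : Ω → ℝ≥0} (hτ : IsOptionalTime ℱ τ) {T : ℝ≥0} (hτT : ∀ ω, τ ω ≤ T) :
    Integrable (fun ω => M (τ ω) ω) P ∧ ∫ ω, M (τ ω) ω ∂P = ∫ ω, M 0 ω ∂P := by
  set τn : ℕ → Ω → WithTop ℝ≥0 := fun n ω => dyadicAbove n (τ ω)
  have hτn : ∀ n, IsStoppingTime ℱ (τn n) := hτ.isStoppingTime_dyadicAbove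
  have hle : ∀ n ω, τn n ω ≤ ↑(T + 1) := fun n ω => WithTop.coe_le_coe.2 <|
    (dyadicAbove_le n _).trans <|
      add_le_add (hτT ω) (inv_le_one_of_one_le₀ (one_le_pow₀ one_le_two))
  have hcountable : ∀ n, (range (τn n)).Countable := fun n =>
    ((countable_range_dyadicAbove n).image _).mono <| by
      rintro _ ⟨ω, rfl⟩
      exact mem_image_of_mem _ (mem_range_self _)
  have hcond : ∀ n, stoppedValue M (τn n) =ᵐ[P] P[M (T + 1) | (hτn n).measurableSpace] :=
    fun n => hM.stoppedValue_ae_eq_condExp_of_le_const_of_countable_range (hτn n) (hle n)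
      (hcountable n)
  have hUI : UniformIntegrable (fun n => stoppedValue M (τn n)) 1 P :=
    ((hM.integrable _).uniformIntegrable_condExp fun n =>
      (hτn n).measurableSpace_le_of_le (hle n)).ae_eq fun n => (hcond n).symm
  have hconv : ∀ᵐ ω ∂P, Tendsto (fun n => stoppedValue M (τn n) ω) atTop (𝓝 (M (τ ω) ω)) :=
    ae_of_all _ fun ω => (hcont ω).continuousAt.tendsto.comp (tendsto_dyadicAbove (τ ω))
  have hint : ∀ n, ∫ ω, stoppedValue M (τn n) ω ∂P = ∫ ω, M 0 ω ∂P := fun n => by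
    rw [integral_congr_ae (hcond n), integral_condExp, ← setIntegral_univ,
      ← hM.setIntegral_eq zero_le MeasurableSet.univ, setIntegral_univ]
  refine ⟨hUI.integrable_of_ae_tendsto hconv,
    tendsto_nhds_unique (hUI.tendsto_integral_of_ae_tendsto hconv) ?_⟩
  simp_rw [hint]
  exact tendsto_const_nhds

variable [IsProbabilityMeasure P]

theorem MeasureTheory.Martingale.mul_measureReal_bandExit_le (hM : Martingale M ℱ P)
    (hcont : ∀ ω, Continuous fun t => M t ω) (c : ℝ) {ε : ℝ} (hε : 0 ≤ ε) (δ : ℝ) (N : ℝ≥0) :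
    (δ + ε) * P.real {ω | bandEntry (M · ω) c ε N < N ∧
      M (bandExit (M · ω) c ε δ N) ω ≤ c - δ} ≤ 2 * ε := by
  have hadp := hM.stronglyAdapted.adapted
  have hσ : IsOptionalTime ℱ fun ω => bandEntry (M · ω) c ε N :=
    isOptionalTime_firstHit (IsOptionalTime.const 0) hadp hcont isOpen_Ioi N
  have hτ : IsOptionalTime ℱ fun ω => bandExit (M · ω) c ε δ N :=
    isOptionalTime_firstHit hσ hadp hcont (isOpen_Iio.union isOpen_Ioi) N
  obtain ⟨hσi, hσ0⟩ :=
    hM.integrable_and_integral_apply_optionalTime hcont hσ fun _ => firstHit_le_right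
  obtain ⟨hτi, hτ0⟩ :=
    hM.integrable_and_integral_apply_optionalTime hcont hτ fun _ => firstHit_le_right
  have hdiff : Integrable (fun ω => M (bandExit (M · ω) c ε δ N) ω -
      M (bandEntry (M · ω) c ε N) ω) P := hτi.sub hσi
  set D := {ω | bandEntry (M · ω) c ε N < N ∧ M (bandExit (M · ω) c ε δ N) ω ≤ c - δ}
  have hτm : Measurable fun ω => M (bandExit (M · ω) c ε δ N) ω :=
    (measurable_uncurry_of_continuous_of_measurable hcont fun t =>
      (hadp t).mono (ℱ.le t) le_rfl).comp (hτ.measurable.prodMk measurable_id)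
  have hD : MeasurableSet D := (ℱ.le N _ (hσ N)).inter (measurableSet_le hτm measurable_const)
  have hpt : ∀ ω, (δ + ε) * D.indicator 1 ω ≤
      2 * ε - (M (bandExit (M · ω) c ε δ N) ω - M (bandEntry (M · ω) c ε N) ω) := by
    intro ω
    by_cases hω : ω ∈ D
    · rw [indicator_of_mem hω, Pi.one_apply, mul_one]
      linarith [le_apply_bandEntry (hcont ω) hω.1, hω.2]
    · rw [indicator_of_notMem hω, mul_zero]
      linarith [apply_bandExit_sub_apply_bandEntry_le (c := c) (δ := δ) (N := N) (hcont ω) hε]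
  calc (δ + ε) * P.real D = ∫ ω, (δ + ε) * D.indicator 1 ω ∂P := by
        rw [integral_const_mul, integral_indicator_one hD]
    _ ≤ ∫ ω, 2 * ε - (M (bandExit (M · ω) c ε δ N) ω - M (bandEntry (M · ω) c ε N) ω) ∂P :=
        integral_mono (((integrable_const 1).indicator hD).const_mul _)
          ((integrable_const _).sub hdiff) hpt
    _ = 2 * ε := by
        rw [integral_sub (integrable_const _) hdiff, integral_sub hτi hσi, hτ0, hσ0]
        simp

theorem MeasureTheory.Martingale.measure_fall_after_max_eq_zero (hM : Martingale M ℱ P)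
    (hcont : ∀ ω, Continuous fun t => M t ω) (c : ℝ) {δ : ℝ} (hδ : 0 < δ) (N : ℝ≥0) :
    P {ω | (∀ r, M r ω ≤ c) ∧ ∃ s t, s ≤ t ∧ t ≤ N ∧ M s ω = c ∧ M t ω < c - δ} = 0 := by
  set B := {ω | (∀ r, M r ω ≤ c) ∧ ∃ s t, s ≤ t ∧ t ≤ N ∧ M s ω = c ∧ M t ω < c - δ}
  have hB : ∀ ε > 0, δ * P.real B ≤ 2 * ε := fun ε hε => by
    have hsub : B ⊆ {ω | bandEntry (M · ω) c ε N < N ∧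
        M (bandExit (M · ω) c ε δ N) ω ≤ c - δ} := by
      rintro ω ⟨hle, s, t, hst, htN, hs, ht⟩
      exact bandEntry_lt_and_apply_bandExit_le (hcont ω) hε hδ.le hle hst htN hs ht
    calc δ * P.real B ≤ (δ + ε) * P.real _ :=
          mul_le_mul (by linarith) (measureReal_mono hsub) measureReal_nonneg (by linarith)
      _ ≤ 2 * ε := hM.mul_measureReal_bandExit_le hcont c hε.le δ N
  have hB0 : P.real B ≤ 0 := le_of_forall_pos_le_add fun η hη => by
    rw [zero_add]
    refine le_of_mul_le_mul_left ?_ hδ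
    linarith [hB (δ * η / 2) (by positivity)]
  rw [← measureReal_eq_zero_iff]
  exact le_antisymm hB0 measureReal_nonneg

theorem MeasureTheory.Martingale.ae_stays_at_max (hM : Martingale M ℱ P)
    (hcont : ∀ ω, Continuous fun t => M t ω) (c : ℝ) :
    ∀ᵐ ω ∂P, (∀ r, M r ω ≤ c) → ∀ s t, s ≤ t → M s ω = c → M t ω = c := by
  have h : ∀ᵐ ω ∂P, ∀ j k : ℕ, ω ∉ {ω | (∀ r, M r ω ≤ c) ∧ ∃ s t, s ≤ t ∧ t ≤ (k : ℝ≥0) ∧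
      M s ω = c ∧ M t ω < c - 1 / (j + 1)} :=
    ae_all_iff.2 fun j => ae_all_iff.2 fun k => measure_eq_zero_iff_ae_notMem.1
      (hM.measure_fall_after_max_eq_zero hcont c (by positivity) k)
  filter_upwards [h] with ω hω hle s t hst hs
  by_contra hne
  obtain ⟨j, hj⟩ := exists_nat_one_div_lt (sub_pos.2 ((hle t).lt_of_ne hne))
  obtain ⟨k, hk⟩ := exists_nat_ge t
  exact hω j k ⟨hle, s, t, hst, hk, hs, by linarith⟩

end OptionalTime

end

theorem stmt16_general {Ω : Type*} {m0 : MeasurableSpace Ω} (P : Measure Ω)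
    [IsProbabilityMeasure P] (ℱ : Filtration ℝ≥0 m0)
    (M : ℝ≥0 → Ω → ℝ) (Minf : Ω → ℝ) (μ : Measure ℝ)
    (hmart : Martingale M ℱ P)
    (hcont : ∀ ω, Continuous fun t => M t ω)
    (hMinf : Measurable Minf)
    (hlim : ∀ᵐ ω ∂P, Tendsto (fun t => M t ω) atTop (𝓝 (Minf ω)))
    (hlaw : P.map Minf = μ)
    (ub : ℝ) :
    (∀ᵐ ω ∂P, (⨆ t, M t ω) = ub →
      ∀ s t : ℝ≥0, s ≤ t → M s ω = ub → M t ω = ub) ∧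
    (∀ᵐ ω ∂P, (⨆ t, M t ω) = ub → Minf ω = ub) ∧
    P {ω | (⨆ t, M t ω) = ub} ≤ μ {ub} := by
  have hstay : ∀ᵐ ω ∂P, (⨆ t, M t ω) = ub →
      ∀ s t : ℝ≥0, s ≤ t → M s ω = ub → M t ω = ub := by
    filter_upwards [hlim, hmart.ae_stays_at_max hcont ub] with ω hl hω hsup
    exact hω fun r => hsup ▸ le_ciSup (bddAbove_range_of_tendsto (hcont ω) hl) r
  have hlimit : ∀ᵐ ω ∂P, (⨆ t, M t ω) = ub → Minf ω = ub := by
    filter_upwards [hlim, hstay] with ω hl hω hsup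
    refine (limit_eq_ciSup_of_stays_at_ciSup (hcont ω) hl ?_).trans hsup
    rw [hsup]
    exact hω hsup
  refine ⟨hstay, hlimit, ?_⟩
  calc P {ω | (⨆ t, M t ω) = ub} ≤ P (Minf ⁻¹' {ub}) :=
        measure_mono_ae (hlimit.mono fun ω h hω => h hω)
    _ = μ {ub} := by rw [← hlaw, Measure.map_apply hMinf (measurableSet_singleton ub)]

theorem stmt16 {Ω : Type*} {m0 : MeasurableSpace Ω} (P : Measure Ω)
    [IsProbabilityMeasure P] (ℱ : Filtration ℝ≥0 m0)
    (M : ℝ≥0 → Ω → ℝ) (Minf : Ω → ℝ) (μ : Measure ℝ)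
    (hmart : Martingale M ℱ P)
    (hcont : ∀ ω, Continuous fun t => M t ω)
    (hUI : UniformIntegrable M 1 P)
    (hMinf : Measurable Minf)
    (hlim : ∀ᵐ ω ∂P, Tendsto (fun t => M t ω) atTop (𝓝 (Minf ω)))
    (hlaw : P.map Minf = μ)
    (ub : ℝ) (hpos : 0 < P {ω | (⨆ t, M t ω) = ub}) :
    (∀ᵐ ω ∂P, (⨆ t, M t ω) = ub →
      ∀ s t : ℝ≥0, s ≤ t → M s ω = ub → M t ω = ub) ∧
    (∀ᵐ ω ∂P, (⨆ t, M t ω) = ub → Minf ω = ub) ∧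
    P {ω | (⨆ t, M t ω) = ub} ≤ μ {ub} :=
  stmt16_general P ℱ M Minf μ hmart hcont hMinf hlim hlaw ub
end

section
/- Let (M_t) be a continuous uniformly integrable martingale with M_0 = 0 and M_∞ ~ μ, and define p(b,b̄) = P(inf_t M_t > b and sup_t M_t < b̄) for b ≤ 0 ≤ b̄. Then p is continuous at (b,b̄) whenever μ({b}) = μ({b̄}) = 0; moreover p(·,b̄) is right-continuous in b (càdlàg) and p(b,·) is left-continuous in b̄ (càglàd). -/
/-!
Write `I` and `S` for the infimum and supremum of the path of `M`. The map
`(b, b̄) ↦ P(b < I, S < b̄)` is the measure of an event that grows with the interval `(b, b̄)`, so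
continuity of measure along increasing unions makes it lower semicontinuous; being monotone in
each variable, it is then right-continuous in `b` and left-continuous in `b̄`. Along decreasing
intersections it tends to `P(b ≤ I, S ≤ b̄)`, so it is continuous wherever
`P(I = b) = P(S = b̄) = 0`.

These atoms are controlled by the law of `M_∞`. For a level `a ≥ 0`, optional stopping at the first
passage above `a`, where a continuous path sits exactly at `a`, gives `E[M_∞; S > a] = a P(S > a)`;
letting `a ↑ c` gives the same identity on `{S ≥ c}`, hence `E[c - M_∞; S = c] = 0`. As
`M_∞ ≤ S`, this forces `M_∞ = c` a.s. on `{S = c}`, so `P(S = c) ≤ μ{c}`. The infimum is the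
supremum of `-M`.
-/

open MeasureTheory Set Filter Topology
open scoped NNReal ENNReal

/-- `p(b,b̄) = P(inf M > b and sup M < b̄)`. -/
noncomputable def pfun {Ω : Type*} [MeasurableSpace Ω] (P : Measure Ω)
    (M : ℝ≥0 → Ω → ℝ) (lb ub : ℝ) : ℝ :=
  (P {ω | lb < (⨅ t, M t ω) ∧ (⨆ t, M t ω) < ub}).toReal

theorem LowerSemicontinuousWithinAt.continuousWithinAt_of_le {α γ : Type*} [TopologicalSpace α]
    [LinearOrder γ] [TopologicalSpace γ] [OrderTopology γ] {f : α → γ} {s : Set α} {x : α}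
    (hf : LowerSemicontinuousWithinAt f s x) (hle : ∀ y ∈ s, f y ≤ f x) :
    ContinuousWithinAt f s x :=
  continuousWithinAt_iff_lower_upperSemicontinuousWithinAt.2
    ⟨hf, fun _ ha => eventually_nhdsWithin_of_forall fun y hy => (hle y hy).trans_lt ha⟩

theorem Continuous.bddAbove_range_of_tendsto_atTop {α : Type*} [LinearOrder α]
    [TopologicalSpace α] [OrderBot α] [CompactIccSpace α] {f : α → ℝ} (hf : Continuous f)
    {L : ℝ} (hL : Tendsto f atTop (𝓝 L)) : BddAbove (range f) := by
  obtain ⟨T, hT⟩ := eventually_atTop.1 (hL.eventually_le_const (lt_add_one L))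
  obtain ⟨B, hB⟩ := (isCompact_Icc (a := ⊥) (b := T)).bddAbove_image hf.continuousOn
  refine ⟨max B (L + 1), forall_mem_range.2 fun t => ?_⟩
  rcases le_total t T with h | h
  · exact le_max_of_le_left (hB ⟨t, ⟨bot_le, h⟩, rfl⟩)
  · exact le_max_of_le_right (hT t h)

theorem Real.iSup_neg_eq_neg_iInf {ι : Sort*} (f : ι → ℝ) : ⨆ i, -f i = -⨅ i, f i := by
  simpa using (Real.mul_iInf_of_nonpos (r := -1) (by norm_num) f).symm

theorem tendsto_floor_mul_two_pow_div (t : ℝ≥0) :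
    Tendsto (fun k : ℕ => (⌊t * 2 ^ k⌋₊ : ℝ≥0) / 2 ^ k) atTop (𝓝 t) := by
  have hlow : Tendsto (fun k : ℕ => t - 2⁻¹ ^ k) atTop (𝓝 t) := by
    simpa using tendsto_const_nhds.sub (NNReal.tendsto_pow_atTop_nhds_zero_of_lt_one
      (r := 2⁻¹) (by norm_num))
  refine tendsto_of_tendsto_of_tendsto_of_le_of_le hlow tendsto_const_nhds (fun k => ?_)
    fun k => div_le_of_le_mul₀ zero_le zero_le (Nat.floor_le zero_le)
  rw [tsub_le_iff_right, inv_pow, inv_eq_one_div, ← add_div, le_div_iff₀ (by positivity)]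
  exact (Nat.lt_floor_add_one _).le

theorem natCast_div_two_pow_le {j n k : ℕ} (h : j ≤ n * 2 ^ k) : (j : ℝ≥0) / 2 ^ k ≤ n := by
  rw [div_le_iff₀ (by positivity)]
  exact_mod_cast h

theorem natCast_mul_two_pow_div (n k : ℕ) : ((n * 2 ^ k : ℕ) : ℝ≥0) / 2 ^ k = n := by
  push_cast
  exact mul_div_cancel_right₀ _ (by positivity)

theorem eventually_exists_dyadic_lt {f : ℝ≥0 → ℝ} (hf : Continuous f) {a : ℝ} {t : ℝ≥0}
    {n : ℕ} (htn : t ≤ n) (hat : a < f t) :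
    ∀ᶠ k in atTop, ∃ j ≤ n * 2 ^ k, a < f ((j : ℝ≥0) / 2 ^ k) :=
  (((hf.tendsto t).comp (tendsto_floor_mul_two_pow_div t)).eventually_const_lt hat).mono
    fun k hk => ⟨_, Nat.floor_le_of_le (by push_cast; gcongr), hk⟩

section TwoSidedEvent

variable {Ω : Type*} [MeasurableSpace Ω] (μ : Measure Ω) {X Y : Ω → ℝ}

theorem lowerSemicontinuous_measure_lt_and_lt :
    LowerSemicontinuous fun x : ℝ × ℝ => μ {ω | x.1 < X ω ∧ Y ω < x.2} := by
  intro x a ha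
  set G : ℕ → Set Ω := fun n => {ω | x.1 + 1 / (n + 1) < X ω ∧ Y ω < x.2 - 1 / (n + 1)}
  have hG : Monotone G := fun m n hmn ω hω => by
    have := Nat.one_div_le_one_div (α := ℝ) hmn
    exact ⟨by linarith [hω.1], by linarith [hω.2]⟩
  have hU : ⋃ n, G n = {ω | x.1 < X ω ∧ Y ω < x.2} := by
    ext ω
    simp only [G, mem_iUnion, mem_ofPred_eq]
    constructor
    · rintro ⟨n, h1, h2⟩
      have := Nat.one_div_pos_of_nat (α := ℝ) (n := n)
      exact ⟨by linarith, by linarith⟩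
    · rintro ⟨h1, h2⟩
      obtain ⟨n, hn⟩ := exists_nat_one_div_lt (lt_min (sub_pos.2 h1) (sub_pos.2 h2))
      exact ⟨n, by linarith [min_le_left (X ω - x.1) (x.2 - Y ω)],
        by linarith [min_le_right (X ω - x.1) (x.2 - Y ω)]⟩
  have hlim := tendsto_measure_iUnion_atTop (μ := μ) hG
  rw [hU] at hlim
  obtain ⟨n, hn⟩ := (hlim.eventually_const_lt ha).exists
  have hε : (0 : ℝ) < 1 / (n + 1) := Nat.one_div_pos_of_nat
  filter_upwards [continuousAt_fst.eventually_lt continuousAt_const (lt_add_of_pos_right x.1 hε),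
    continuousAt_const.eventually_lt continuousAt_snd (sub_lt_self x.2 hε)] with y h1 h2
  exact hn.trans_le (measure_mono fun ω hω => ⟨h1.trans hω.1, hω.2.trans h2⟩)

theorem upperSemicontinuousAt_measure_lt_and_lt [IsFiniteMeasure μ] (hX : Measurable X)
    (hY : Measurable Y) {b w : ℝ} (hb : μ {ω | X ω = b} = 0) (hw : μ {ω | Y ω = w} = 0) :
    UpperSemicontinuousAt (fun x : ℝ × ℝ => μ {ω | x.1 < X ω ∧ Y ω < x.2}) (b, w) := by
  intro a ha
  set K : ℕ → Set Ω := fun n => {ω | b - 1 / (n + 1) < X ω ∧ Y ω < w + 1 / (n + 1)}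
  have hK : Antitone K := fun m n hmn ω hω => by
    have := Nat.one_div_le_one_div (α := ℝ) hmn
    exact ⟨by linarith [hω.1], by linarith [hω.2]⟩
  have hI : ⋂ n, K n = {ω | b ≤ X ω ∧ Y ω ≤ w} := by
    ext ω
    simp only [K, mem_iInter, mem_ofPred_eq]
    constructor
    · intro h
      refine ⟨le_of_not_gt fun hlt => ?_, le_of_not_gt fun hlt => ?_⟩
      · obtain ⟨n, hn⟩ := exists_nat_one_div_lt (sub_pos.2 hlt)
        linarith [(h n).1]
      · obtain ⟨n, hn⟩ := exists_nat_one_div_lt (sub_pos.2 hlt)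
        linarith [(h n).2]
    · rintro ⟨h1, h2⟩ n
      have := Nat.one_div_pos_of_nat (α := ℝ) (n := n)
      exact ⟨by linarith, by linarith⟩
  have hae : {ω | b ≤ X ω ∧ Y ω ≤ w} =ᵐ[μ] {ω | b < X ω ∧ Y ω < w} := by
    filter_upwards [measure_eq_zero_iff_ae_notMem.1 hb, measure_eq_zero_iff_ae_notMem.1 hw]
      with ω h1 h2
    change (b ≤ X ω ∧ Y ω ≤ w) = (b < X ω ∧ Y ω < w)
    rw [eq_iff_iff]
    exact ⟨fun h => ⟨h.1.lt_of_ne' h1, h.2.lt_of_ne h2⟩, fun h => ⟨h.1.le, h.2.le⟩⟩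
  have hlim : Tendsto (μ ∘ K) atTop (𝓝 (μ {ω | b < X ω ∧ Y ω < w})) := by
    rw [← measure_congr hae, ← hI]
    exact tendsto_measure_iInter_atTop (fun n => ((measurableSet_lt measurable_const hX).inter
      (measurableSet_lt hY measurable_const)).nullMeasurableSet) hK ⟨0, measure_ne_top _ _⟩
  obtain ⟨n, hn⟩ := (hlim.eventually_lt_const ha).exists
  have hε : (0 : ℝ) < 1 / (n + 1) := Nat.one_div_pos_of_nat
  filter_upwards [continuousAt_const.eventually_lt continuousAt_fst (sub_lt_self b hε),
    continuousAt_snd.eventually_lt continuousAt_const (lt_add_of_pos_right w hε)] with y h1 h2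
  refine lt_of_le_of_lt (measure_mono fun ω hω => ?_) hn
  exact ⟨h1.trans hω.1, hω.2.trans h2⟩

theorem continuousAt_toReal_measure_lt_and_lt [IsFiniteMeasure μ] (hX : Measurable X)
    (hY : Measurable Y) {b w : ℝ} (hb : μ {ω | X ω = b} = 0) (hw : μ {ω | Y ω = w} = 0) :
    ContinuousAt (fun x : ℝ × ℝ => (μ {ω | x.1 < X ω ∧ Y ω < x.2}).toReal) (b, w) :=
  ContinuousAt.comp (f := fun x : ℝ × ℝ => μ {ω | x.1 < X ω ∧ Y ω < x.2})
    (ENNReal.continuousAt_toReal (measure_ne_top _ _))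
    (continuousAt_iff_lower_upperSemicontinuousAt.2
      ⟨(lowerSemicontinuous_measure_lt_and_lt μ).lowerSemicontinuousAt _,
        upperSemicontinuousAt_measure_lt_and_lt μ hX hY hb hw⟩)

theorem continuousWithinAt_Ici_toReal_measure_lt_and_lt [IsFiniteMeasure μ] (b w : ℝ) :
    ContinuousWithinAt (fun u => (μ {ω | u < X ω ∧ Y ω < w}).toReal) (Ici b) b :=
  ContinuousAt.comp_continuousWithinAt (f := fun u => μ {ω | u < X ω ∧ Y ω < w})
    (ENNReal.continuousAt_toReal (measure_ne_top _ _)) <|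
    LowerSemicontinuousWithinAt.continuousWithinAt_of_le
      (((lowerSemicontinuous_measure_lt_and_lt μ).comp
        (continuous_id.prodMk continuous_const)).lowerSemicontinuousWithinAt _ _)
      fun _ hu => measure_mono fun _ hω => ⟨(mem_Ici.1 hu).trans_lt hω.1, hω.2⟩

theorem continuousWithinAt_Iic_toReal_measure_lt_and_lt [IsFiniteMeasure μ] (b w : ℝ) :
    ContinuousWithinAt (fun v => (μ {ω | b < X ω ∧ Y ω < v}).toReal) (Iic w) w :=
  ContinuousAt.comp_continuousWithinAt (f := fun v => μ {ω | b < X ω ∧ Y ω < v})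
    (ENNReal.continuousAt_toReal (measure_ne_top _ _)) <|
    LowerSemicontinuousWithinAt.continuousWithinAt_of_le
      (((lowerSemicontinuous_measure_lt_and_lt μ).comp
        (continuous_const.prodMk continuous_id)).lowerSemicontinuousWithinAt _ _)
      fun _ hv => measure_mono fun _ hω => ⟨hω.1, hω.2.trans_le (mem_Iic.1 hv)⟩

end TwoSidedEvent

section PathSupremum

variable {T Ω : Type*} [TopologicalSpace T] [TopologicalSpace.SeparableSpace T]
  [MeasurableSpace Ω] {X : T → Ω → ℝ}

theorem measurable_iSup_of_continuous (hX : ∀ t, Measurable (X t))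
    (hc : ∀ ω, Continuous fun t => X t ω) : Measurable fun ω => ⨆ t, X t ω := by
  obtain ⟨D, hDc, hD⟩ := TopologicalSpace.exists_countable_dense T
  have := hDc.to_subtype
  rw [show (fun ω => ⨆ t, X t ω) = fun ω => ⨆ t : D, X t ω from
    funext fun ω => (hD.ciSup' (hc ω)).symm]
  exact .iSup fun t => hX t

theorem measurable_iInf_of_continuous (hX : ∀ t, Measurable (X t))
    (hc : ∀ ω, Continuous fun t => X t ω) : Measurable fun ω => ⨅ t, X t ω := by
  obtain ⟨D, hDc, hD⟩ := TopologicalSpace.exists_countable_dense T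
  have := hDc.to_subtype
  rw [show (fun ω => ⨅ t, X t ω) = fun ω => ⨅ t : D, X t ω from
    funext fun ω => (hD.ciInf' (hc ω)).symm]
  exact .iInf fun t => hX t

end PathSupremum

namespace MeasureTheory

variable {Ω ι κ : Type*} {m0 : MeasurableSpace Ω} {μ : Measure Ω}

def Filtration.reindex [Preorder ι] [Preorder κ] (ℱ : Filtration ι m0) {φ : κ → ι}
    (hφ : Monotone φ) : Filtration κ m0 :=
  ⟨fun i => ℱ (φ i), fun _ _ h => ℱ.mono (hφ h), fun i => ℱ.le (φ i)⟩

theorem Martingale.reindex [Preorder ι] [Preorder κ] {ℱ : Filtration ι m0} {f : ι → Ω → ℝ}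
    (hf : Martingale f ℱ μ) {φ : κ → ι} (hφ : Monotone φ) :
    Martingale (fun i => f (φ i)) (ℱ.reindex hφ) μ :=
  ⟨fun i => hf.stronglyAdapted (φ i), fun _ _ h => hf.condExp_ae_eq (hφ h)⟩

theorem Martingale.measurable [Preorder ι] {ℱ : Filtration ι m0} {f : ι → Ω → ℝ}
    (hf : Martingale f ℱ μ) (i : ι) : Measurable (f i) :=
  ((hf.stronglyMeasurable i).mono (ℱ.le i)).measurable

theorem UniformIntegrable.comp {f : ι → Ω → ℝ} {p : ℝ≥0∞} (hf : UniformIntegrable f p μ)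
    (φ : κ → ι) : UniformIntegrable (fun i => f (φ i)) p μ :=
  ⟨fun i => hf.1 (φ i), fun _ hε => (hf.2.1 hε).imp fun _ h => ⟨h.1, fun i => h.2 (φ i)⟩,
    hf.2.2.imp fun _ h i => h (φ i)⟩

-- `Minf` need not be measurable, so the martingale is closed by an integrable version of it.
theorem Martingale.exists_ae_eq_condExp_of_uniformIntegrable [IsFiniteMeasure μ]
    {ℱ : Filtration ℝ≥0 m0} {M : ℝ≥0 → Ω → ℝ} {Minf : Ω → ℝ} (hmart : Martingale M ℱ μ)
    (hUI : UniformIntegrable M 1 μ)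
    (hlim : ∀ᵐ ω ∂μ, Tendsto (fun t => M t ω) atTop (𝓝 (Minf ω))) :
    ∃ g : Ω → ℝ, Integrable g μ ∧ g =ᵐ[μ] Minf ∧ ∀ n : ℕ, M n =ᵐ[μ] μ[g | ℱ n] := by
  have hmart' := hmart.reindex (Nat.mono_cast (α := ℝ≥0))
  have hUI' := hUI.comp (Nat.cast : ℕ → ℝ≥0)
  obtain ⟨R, hR⟩ := hUI'.2.2
  refine ⟨_, (Filtration.memLp_limitProcess_of_eLpNorm_bdd hUI'.1 hR).integrable le_rfl, ?_,
    hmart'.ae_eq_condExp_limitProcess hUI'⟩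
  filter_upwards [hmart'.submartingale.ae_tendsto_limitProcess_of_uniformIntegrable hUI', hlim]
    with ω h1 h2
  exact tendsto_nhds_unique h1 (h2.comp tendsto_natCast_atTop_atTop)

theorem integral_eq_of_tendsto_ae_condExp [IsFiniteMeasure μ] {m : ℕ → MeasurableSpace Ω}
    (hm : ∀ k, m k ≤ m0) {h V : Ω → ℝ} (hh : Integrable h μ) (hV : Integrable V μ)
    (hlim : ∀ᵐ ω ∂μ, Tendsto (fun k => μ[h | m k] ω) atTop (𝓝 (V ω))) :
    ∫ ω, V ω ∂μ = ∫ ω, h ω ∂μ := by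
  have hUI := hh.uniformIntegrable_condExp hm
  have hL1 := tendsto_Lp_finite_of_tendsto_ae le_rfl ENNReal.one_ne_top hUI.1
    (memLp_one_iff_integrable.2 hV) hUI.2.1 hlim
  refine tendsto_nhds_unique (tendsto_integral_of_L1' V hV.1
    (Eventually.of_forall fun _ => integrable_condExp) hL1) ?_
  simp_rw [integral_condExp (hm _)]
  exact tendsto_const_nhds

theorem setIntegral_le_eq_mul_of_forall_lt [IsFiniteMeasure μ] {S g : Ω → ℝ}
    (hS : Measurable S) (hg : Integrable g μ) {c : ℝ} (hc : 0 < c)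
    (h : ∀ a ∈ Ioo 0 c, ∫ ω in {ω | a < S ω}, g ω ∂μ = a * μ.real {ω | a < S ω}) :
    ∫ ω in {ω | c ≤ S ω}, g ω ∂μ = c * μ.real {ω | c ≤ S ω} := by
  obtain ⟨u, hu_mono, hu_mem, hu⟩ := exists_seq_strictMono_tendsto' hc
  have hanti : Antitone fun n => {ω | u n < S ω} := fun _ _ hmn _ hω =>
    (hu_mono.monotone hmn).trans_lt hω
  have hI : ⋂ n, {ω | u n < S ω} = {ω | c ≤ S ω} := by
    ext ω
    simp only [mem_iInter, mem_ofPred_eq]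
    refine ⟨fun h => le_of_not_gt fun hlt => ?_, fun h n => (hu_mem n).2.trans_le h⟩
    obtain ⟨n, hn⟩ := (hu.eventually_const_lt hlt).exists
    exact (h n).asymm hn
  have hmeas : ∀ n, MeasurableSet {ω | u n < S ω} := fun _ => measurableSet_lt measurable_const hS
  have hL := tendsto_setIntegral_of_antitone hmeas hanti ⟨0, hg.integrableOn⟩
  have hR : Tendsto (fun n => u n * μ.real {ω | u n < S ω}) atTop
      (𝓝 (c * μ.real (⋂ n, {ω | u n < S ω}))) :=
    hu.mul ((ENNReal.tendsto_toReal (measure_ne_top _ _)).comp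
      (tendsto_measure_iInter_atTop (fun n => (hmeas n).nullMeasurableSet) hanti
        ⟨0, measure_ne_top _ _⟩))
  rw [← hI]
  exact tendsto_nhds_unique (hL.congr fun n => h (u n) (hu_mem n)) hR

section DyadicPassage

variable {M : ℝ≥0 → Ω → ℝ}

-- Optional stopping is applied on the grid `j / 2 ^ k`, where stopping times take countably many
-- values; by uniform continuity of the path, its value at these passage times tends to `a`.
noncomputable def dyadicPassageTime (M : ℝ≥0 → Ω → ℝ) (a : ℝ) (n k : ℕ) : Ω → ℕ :=
  hittingBtwn (fun j : ℕ => M ((j : ℝ≥0) / 2 ^ k)) (Ioi a) 0 (n * 2 ^ k)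

theorem dyadicPassageTime_of_not_exists {ω : Ω} {a : ℝ} {n : ℕ}
    (h : ¬∃ t ≤ (n : ℝ≥0), a < M t ω) (k : ℕ) : dyadicPassageTime M a n k ω = n * 2 ^ k :=
  hittingBtwn_eq_end_iff.2 fun ⟨_, hj, hja⟩ => (h ⟨_, natCast_div_two_pow_le hj.2, hja⟩).elim

theorem dyadicPassageTime_spec {ω : Ω} {a : ℝ} (h0 : M 0 ω ≤ a) {n k : ℕ}
    (h : ∃ j ≤ n * 2 ^ k, a < M ((j : ℝ≥0) / 2 ^ k) ω) :
    ∃ i : ℕ, dyadicPassageTime M a n k ω = i + 1 ∧ i + 1 ≤ n * 2 ^ k ∧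
      M ((i : ℝ≥0) / 2 ^ k) ω ≤ a ∧ a < M (((i + 1 : ℕ) : ℝ≥0) / 2 ^ k) ω := by
  obtain ⟨j, hj, hja⟩ := h
  have hmem : a < M ((dyadicPassageTime M a n k ω : ℝ≥0) / 2 ^ k) ω :=
    hittingBtwn_mem_set (u := fun j : ℕ => M ((j : ℝ≥0) / 2 ^ k)) ⟨j, ⟨zero_le, hj⟩, hja⟩
  obtain ⟨i, hi⟩ := Nat.exists_eq_add_one_of_ne_zero (n := dyadicPassageTime M a n k ω)
    fun hzero => by
      rw [hzero, Nat.cast_zero, zero_div] at hmem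
      exact (h0.trans_lt hmem).false
  refine ⟨i, hi, hi ▸ hittingBtwn_le ω, not_lt.1 fun h => ?_, by rwa [hi] at hmem⟩
  exact notMem_of_lt_hittingBtwn (u := fun j : ℕ => M ((j : ℝ≥0) / 2 ^ k))
    (show i < dyadicPassageTime M a n k ω by omega) zero_le h

open Classical in
theorem tendsto_apply_dyadicPassageTime {ω : Ω} (hc : Continuous fun t => M t ω) {a : ℝ}
    (h0 : M 0 ω ≤ a) (n : ℕ) :
    Tendsto (fun k => M ((dyadicPassageTime M a n k ω : ℝ≥0) / 2 ^ k) ω) atTop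
      (𝓝 ({ω | ∃ t ≤ (n : ℝ≥0), a < M t ω}.piecewise (fun _ => a) (M n) ω)) := by
  set H := {ω | ∃ t ≤ (n : ℝ≥0), a < M t ω}
  by_cases hhit : ω ∈ H
  swap
  · rw [piecewise_eq_of_notMem H _ _ hhit]
    simp only [dyadicPassageTime_of_not_exists hhit, natCast_mul_two_pow_div]
    exact tendsto_const_nhds
  rw [piecewise_eq_of_mem H _ _ hhit]
  obtain ⟨t, htn, hat⟩ := hhit
  have hgrid := eventually_exists_dyadic_lt hc htn hat
  refine tendsto_order.2 ⟨fun b hb => hgrid.mono fun k hk => ?_, fun b hb => ?_⟩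
  · obtain ⟨i, hi, -, -, hlt⟩ := dyadicPassageTime_spec h0 hk
    rw [hi]
    exact hb.trans hlt
  obtain ⟨δ, hδ, hunif⟩ := Metric.uniformContinuousOn_iff.1
    ((isCompact_Icc (a := (0 : ℝ≥0)) (b := n)).uniformContinuousOn_of_continuous hc.continuousOn)
    (b - a) (sub_pos.2 hb)
  have hmesh : ∀ᶠ k in atTop, (1 / 2 : ℝ) ^ k < δ :=
    (tendsto_pow_atTop_nhds_zero_of_lt_one (by norm_num) (by norm_num)).eventually
      (gt_mem_nhds hδ)
  filter_upwards [hgrid, hmesh] with k hk hkδ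
  obtain ⟨i, hi, hin, hle, -⟩ := dyadicPassageTime_spec h0 hk
  rw [hi]
  have hdist : dist (((i + 1 : ℕ) : ℝ≥0) / 2 ^ k) ((i : ℝ≥0) / 2 ^ k) < δ := by
    convert hkδ using 1
    rw [NNReal.dist_eq]
    push_cast
    rw [← sub_div, add_sub_cancel_left, abs_of_pos (by positivity), one_div_pow]
  have := hunif _ ⟨zero_le, natCast_div_two_pow_le hin⟩ _
    ⟨zero_le, natCast_div_two_pow_le (by omega)⟩ hdist
  rw [Real.dist_eq, abs_lt] at this
  linarith [this.2]

variable {ℱ : Filtration ℝ≥0 m0} {P : Measure Ω}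

theorem measurableSet_exists_le_lt (hadp : StronglyAdapted ℱ M)
    (hcont : ∀ ω, Continuous fun t => M t ω) (a : ℝ) (n : ℕ) :
    MeasurableSet[ℱ n] {ω | ∃ t ≤ (n : ℝ≥0), a < M t ω} := by
  have h : {ω | ∃ t ≤ (n : ℝ≥0), a < M t ω} =
      ⋃ k : ℕ, ⋃ j : ℕ, ⋃ _ : j ≤ n * 2 ^ k, {ω | a < M ((j : ℝ≥0) / 2 ^ k) ω} := by
    ext ω
    simp only [mem_ofPred_eq, mem_iUnion, exists_prop]
    exact ⟨fun ⟨t, htn, hat⟩ => (eventually_exists_dyadic_lt (hcont ω) htn hat).exists,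
      fun ⟨k, j, hj, hja⟩ => ⟨_, natCast_div_two_pow_le hj, hja⟩⟩
  rw [h]
  exact .iUnion fun k => .iUnion fun j => .iUnion fun hj => ℱ.mono (natCast_div_two_pow_le hj) _
    (measurableSet_lt measurable_const (hadp _).measurable)

theorem Martingale.setIntegral_exists_le_lt_eq [IsFiniteMeasure P] (hmart : Martingale M ℱ P)
    (hcont : ∀ ω, Continuous fun t => M t ω) {a : ℝ} (h0 : ∀ ω, M 0 ω ≤ a) (n : ℕ) :
    ∫ ω in {ω | ∃ t ≤ (n : ℝ≥0), a < M t ω}, M n ω ∂P =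
      a * P.real {ω | ∃ t ≤ (n : ℝ≥0), a < M t ω} := by
  classical
  set H := {ω | ∃ t ≤ (n : ℝ≥0), a < M t ω}
  have hH : MeasurableSet H := ℱ.le n _ (measurableSet_exists_le_lt hmart.stronglyAdapted hcont a n)
  have hint := hmart.integrable (n : ℝ≥0)
  have hdy : ∀ k : ℕ, Monotone fun j : ℕ => (j : ℝ≥0) / 2 ^ k := fun k =>
    Nat.mono_cast.div_const zero_le
  have hτ : ∀ k, IsStoppingTime (ℱ.reindex (hdy k))
      fun ω => (dyadicPassageTime M a n k ω : WithTop ℕ) := fun k =>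
    (hmart.reindex (hdy k)).stronglyAdapted.adapted.isStoppingTime_hittingBtwn measurableSet_Ioi
  have hstop : ∀ k, (fun ω => M ((dyadicPassageTime M a n k ω : ℝ≥0) / 2 ^ k) ω)
      =ᵐ[P] P[M n | (hτ k).measurableSpace] := fun k => by
    have := (hmart.reindex (hdy k)).stoppedValue_ae_eq_condExp_of_le_const (hτ k)
      (n := n * 2 ^ k) fun ω => WithTop.coe_le_coe.2 (hittingBtwn_le ω)
    rw [natCast_mul_two_pow_div] at this
    exact this
  have key : ∫ ω, H.piecewise (fun _ => a) (M n) ω ∂P = ∫ ω, M n ω ∂P := by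
    refine integral_eq_of_tendsto_ae_condExp (fun k => (hτ k).measurableSpace_le) hint
      (Integrable.piecewise hH (integrableOn_const) hint.integrableOn) ?_
    filter_upwards [ae_all_iff.2 hstop] with ω hω
    exact (tendsto_apply_dyadicPassageTime (hcont ω) (h0 ω) n).congr hω
  rw [integral_piecewise hH (integrableOn_const) hint.integrableOn, ← integral_add_compl hH hint,
    setIntegral_const, smul_eq_mul] at key
  linarith

end DyadicPassage

section Supremum

variable {P : Measure Ω} [IsFiniteMeasure P]
  {ℱ : Filtration ℝ≥0 m0} {M : ℝ≥0 → Ω → ℝ} {g : Ω → ℝ}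

theorem Martingale.setIntegral_exists_lt_eq (hmart : Martingale M ℱ P)
    (hcont : ∀ ω, Continuous fun t => M t ω) (hg : Integrable g P)
    (hclose : ∀ n : ℕ, M n =ᵐ[P] P[g | ℱ n]) {a : ℝ} (h0 : ∀ ω, M 0 ω ≤ a) :
    ∫ ω in {ω | ∃ t, a < M t ω}, g ω ∂P = a * P.real {ω | ∃ t, a < M t ω} := by
  set H : ℕ → Set Ω := fun n => {ω | ∃ t ≤ (n : ℝ≥0), a < M t ω}
  have hHm : ∀ n : ℕ, MeasurableSet[ℱ n] (H n) :=
    measurableSet_exists_le_lt hmart.stronglyAdapted hcont a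
  have hmono : Monotone H := fun m n hmn ω ⟨t, ht, hat⟩ =>
    ⟨t, ht.trans (by exact_mod_cast hmn), hat⟩
  have hU : ⋃ n, H n = {ω | ∃ t, a < M t ω} := by
    ext ω
    simp only [H, mem_iUnion, mem_ofPred_eq]
    exact ⟨fun ⟨_, t, _, hat⟩ => ⟨t, hat⟩, fun ⟨t, hat⟩ => ⟨⌈t⌉₊, t, Nat.le_ceil t, hat⟩⟩
  have hstep : ∀ n, ∫ ω in H n, g ω ∂P = a * P.real (H n) := fun n => by
    calc ∫ ω in H n, g ω ∂P = ∫ ω in H n, (P[g | ℱ n]) ω ∂P :=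
          (setIntegral_condExp (ℱ.le n) hg (hHm n)).symm
      _ = ∫ ω in H n, M n ω ∂P :=
          setIntegral_congr_ae (ℱ.le n _ (hHm n)) ((hclose n).mono fun ω h _ => h.symm)
      _ = a * P.real (H n) := hmart.setIntegral_exists_le_lt_eq hcont h0 n
  have hL := tendsto_setIntegral_of_monotone (fun n : ℕ => ℱ.le n _ (hHm n)) hmono
    hg.integrableOn
  have hR : Tendsto (fun n => a * P.real (H n)) atTop (𝓝 (a * P.real (⋃ n, H n))) :=
    ((ENNReal.tendsto_toReal (measure_ne_top _ _)).comp
      (tendsto_measure_iUnion_atTop hmono)).const_mul a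
  rw [← hU]
  exact tendsto_nhds_unique (hL.congr hstep) hR

theorem Martingale.setIntegral_lt_iSup_eq (hmart : Martingale M ℱ P)
    (hcont : ∀ ω, Continuous fun t => M t ω) (hM0 : ∀ ω, M 0 ω = 0) (hg : Integrable g P)
    (hclose : ∀ n : ℕ, M n =ᵐ[P] P[g | ℱ n])
    (hlim : ∀ᵐ ω ∂P, Tendsto (fun t => M t ω) atTop (𝓝 (g ω))) {a : ℝ} (ha : 0 ≤ a) :
    ∫ ω in {ω | a < ⨆ t, M t ω}, g ω ∂P = a * P.real {ω | a < ⨆ t, M t ω} := by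
  have hae : {ω | a < ⨆ t, M t ω} =ᵐ[P] {ω | ∃ t, a < M t ω} := by
    filter_upwards [hlim] with ω h
    exact propext (lt_ciSup_iff ((hcont ω).bddAbove_range_of_tendsto_atTop h))
  rw [setIntegral_congr_set hae, measureReal_congr hae]
  exact hmart.setIntegral_exists_lt_eq hcont hg hclose fun ω => (hM0 ω).trans_le ha

theorem Martingale.setIntegral_le_iSup_eq (hmart : Martingale M ℱ P)
    (hcont : ∀ ω, Continuous fun t => M t ω) (hM0 : ∀ ω, M 0 ω = 0) (hg : Integrable g P)
    (hclose : ∀ n : ℕ, M n =ᵐ[P] P[g | ℱ n])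
    (hlim : ∀ᵐ ω ∂P, Tendsto (fun t => M t ω) atTop (𝓝 (g ω))) {c : ℝ} (hc : 0 ≤ c) :
    ∫ ω in {ω | c ≤ ⨆ t, M t ω}, g ω ∂P = c * P.real {ω | c ≤ ⨆ t, M t ω} := by
  rcases hc.eq_or_lt with rfl | hc
  · have huniv : {ω | 0 ≤ ⨆ t, M t ω} =ᵐ[P] (univ : Set Ω) := by
      filter_upwards [hlim] with ω h
      exact eq_true ((hM0 ω).symm.le.trans
        (le_ciSup ((hcont ω).bddAbove_range_of_tendsto_atTop h) 0))
    rw [setIntegral_congr_set huniv, setIntegral_univ, zero_mul,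
      ← integral_condExp (ℱ.le ((0 : ℕ) : ℝ≥0)), ← integral_congr_ae (hclose 0)]
    simp [hM0]
  exact setIntegral_le_eq_mul_of_forall_lt
    (measurable_iSup_of_continuous hmart.measurable hcont) hg hc
    fun a ha => hmart.setIntegral_lt_iSup_eq hcont hM0 hg hclose hlim ha.1.le

theorem Martingale.measure_iSup_eq_eq_zero (hmart : Martingale M ℱ P)
    (hcont : ∀ ω, Continuous fun t => M t ω) (hM0 : ∀ ω, M 0 ω = 0) (hg : Integrable g P)
    (hclose : ∀ n : ℕ, M n =ᵐ[P] P[g | ℱ n])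
    (hlim : ∀ᵐ ω ∂P, Tendsto (fun t => M t ω) atTop (𝓝 (g ω))) {c : ℝ} (hc : 0 ≤ c)
    (hatom : P {ω | g ω = c} = 0) :
    P {ω | ⨆ t, M t ω = c} = 0 := by
  set S := fun ω => ⨆ t, M t ω
  have hS : Measurable S := measurable_iSup_of_continuous hmart.measurable hcont
  have hgS : ∀ᵐ ω ∂P, g ω ≤ S ω := by
    filter_upwards [hlim] with ω h
    exact le_of_tendsto' h fun t => le_ciSup ((hcont ω).bddAbove_range_of_tendsto_atTop h) t
  set E := {ω | c ≤ S ω} \ {ω | c < S ω}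
  have hlt : MeasurableSet {ω | c < S ω} := measurableSet_lt measurable_const hS
  have hEm : MeasurableSet E := (measurableSet_le measurable_const hS).diff hlt
  have hsub : {ω | c < S ω} ⊆ {ω | c ≤ S ω} := fun _ h => le_of_lt (α := ℝ) h
  have hzero : ∫ ω in E, (c - g ω) ∂P = 0 := by
    rw [integral_sub (integrable_const c).integrableOn hg.integrableOn, setIntegral_const,
      smul_eq_mul, setIntegral_sdiff hlt hg.integrableOn hsub, measureReal_sdiff hsub hlt,
      hmart.setIntegral_le_iSup_eq hcont hM0 hg hclose hlim hc,
      hmart.setIntegral_lt_iSup_eq hcont hM0 hg hclose hlim hc]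
    ring
  have hnonneg : 0 ≤ᵐ[P.restrict E] fun ω => c - g ω := by
    filter_upwards [ae_restrict_mem hEm, ae_restrict_of_ae hgS] with ω hω h
    exact sub_nonneg.2 (h.trans (not_lt.1 hω.2))
  have hgc := (setIntegral_eq_zero_iff_of_nonneg_ae hnonneg
    ((integrable_const c).integrableOn.sub hg.integrableOn)).1 hzero
  have hEq : {ω | S ω = c} = E := by
    ext ω
    simp only [E, Set.mem_sdiff, mem_ofPred_eq, not_lt]
    exact ⟨fun h => ⟨h.ge, h.le⟩, fun h => le_antisymm h.2 h.1⟩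
  refine le_antisymm ?_ zero_le
  rw [hEq, ← hatom]
  refine measure_mono_ae ?_
  filter_upwards [(ae_restrict_iff' hEm).1 hgc] with ω h hω
  exact (sub_eq_zero.1 (h hω)).symm

end Supremum

end MeasureTheory

theorem stmt17 {Ω : Type*} {m0 : MeasurableSpace Ω} (P : Measure Ω)
    [IsProbabilityMeasure P] (ℱ : Filtration ℝ≥0 m0)
    (M : ℝ≥0 → Ω → ℝ) (Minf : Ω → ℝ)
    (hmart : Martingale M ℱ P)
    (hcont : ∀ ω, Continuous fun t => M t ω)
    (hUI : UniformIntegrable M 1 P)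
    (hM0 : ∀ ω, M 0 ω = 0)
    (hlim : ∀ᵐ ω ∂P, Tendsto (fun t => M t ω) atTop (𝓝 (Minf ω))) :
    (∀ lb ub : ℝ, lb ≤ 0 → 0 ≤ ub →
      P (Minf ⁻¹' {lb}) = 0 → P (Minf ⁻¹' {ub}) = 0 →
      ContinuousAt (fun x : ℝ × ℝ => pfun P M x.1 x.2) (lb, ub)) ∧
    (∀ lb ub : ℝ, lb ≤ 0 → 0 ≤ ub →
      ContinuousWithinAt (fun u => pfun P M u ub) (Ici lb) lb) ∧
    (∀ lb ub : ℝ, lb ≤ 0 → 0 ≤ ub →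
      ContinuousWithinAt (fun w => pfun P M lb w) (Iic ub) ub) := by
  refine ⟨fun lb ub hlb hub hPlb hPub => ?_,
    fun lb ub _ _ => continuousWithinAt_Ici_toReal_measure_lt_and_lt P lb ub,
    fun lb ub _ _ => continuousWithinAt_Iic_toReal_measure_lt_and_lt P lb ub⟩
  obtain ⟨g, hg, hgM, hclose⟩ := hmart.exists_ae_eq_condExp_of_uniformIntegrable hUI hlim
  have hlimg : ∀ᵐ ω ∂P, Tendsto (fun t => M t ω) atTop (𝓝 (g ω)) := by
    filter_upwards [hlim, hgM] with ω h hω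
    rwa [hω]
  have hatom : ∀ c, P (Minf ⁻¹' {c}) = 0 → P {ω | g ω = c} = 0 := fun c h =>
    (measure_congr (hgM.mono fun ω hω => show (g ω = c) = (Minf ω = c) by rw [hω])).trans h
  have hsup := hmart.measure_iSup_eq_eq_zero hcont hM0 hg hclose hlimg hub (hatom ub hPub)
  have hinf := hmart.neg.measure_iSup_eq_eq_zero (fun ω => (hcont ω).neg) (by simp [hM0]) hg.neg
    (fun n => (hclose n).neg.trans (condExp_neg _ _).symm) (hlimg.mono fun _ h => h.neg)
    (neg_nonneg.2 hlb) (by simpa using hatom lb hPlb)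
  simp only [Pi.neg_apply, Real.iSup_neg_eq_neg_iInf, neg_inj] at hinf
  exact continuousAt_toReal_measure_lt_and_lt P
    (measurable_iInf_of_continuous hmart.measurable hcont)
    (measurable_iSup_of_continuous hmart.measurable hcont) hinf hsup
end
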